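/- arXiv:2301.13827 — 10 statements merged into one kernel-verified Lean document; each statement's English description precedes it below -/
import Mathlib

section
/- Fix a real η > 1 and define the mechanism M* by Q*(v) = (v/η)^{1/(η−1)} and T*(v) = v·Q*(v) − ∫₀^v Q*(s) ds = (v/η)^{η/(η−1)} for v ≥ 0. Then (i) (Q*, T*) is incentive compatible and individually rational; (ii) for every v ≥ 0 the per-type profit satisfies T*(v) − Q*(v)^η/η = η^{−η/(η−1)}·s(v); and consequently (iii) for every Borel probability measure μ on [0,∞) with S_μ = ∫ s(v) dμ(v) < ∞, the expected profit equals ∫ (T*(v) − Q*(v)^η/η) dμ(v) = η^{−η/(η−1)}·S_μ. -/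
open Real Set MeasureTheory

/-- Quality-discrimination model with cost `c q = q ^ η / η`, `η > 1`.
The mechanism `Q* v = (v / η) ^ (1 / (η - 1))`,
`T* v = v * Q* v - ∫₀ᵛ Q* = (v / η) ^ (η / (η - 1))` is incentive compatible and
individually rational, its per-type profit equals `η ^ (-η/(η-1))` times the efficient
surplus `s v = ((η-1)/η) * v ^ (η/(η-1))`, and hence for every Borel probability
measure `μ` on `[0, ∞)` with finite efficient surplus, the expected profit equals
`η ^ (-η/(η-1)) * S_μ`. -/
theorem stmt_1 (η : ℝ) (hη : 1 < η) (Q T : ℝ → ℝ)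
    (hQ : ∀ v : ℝ, Q v = (v / η) ^ (1 / (η - 1)))
    (hT : ∀ v : ℝ, T v = (v / η) ^ (η / (η - 1))) :
    -- the envelope formula for the transfers
    (∀ v : ℝ, 0 ≤ v → T v = v * Q v - ∫ s in (0 : ℝ)..v, Q s) ∧
    -- incentive compatibility
    (∀ v v' : ℝ, 0 ≤ v → 0 ≤ v' → v * Q v' - T v' ≤ v * Q v - T v) ∧
    -- individual rationality
    (∀ v : ℝ, 0 ≤ v → 0 ≤ v * Q v - T v) ∧
    -- per-type profit is a constant share of the efficient surplus
    (∀ v : ℝ, 0 ≤ v →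
      T v - Q v ^ η / η
        = η ^ (-(η / (η - 1))) * ((η - 1) / η * v ^ (η / (η - 1)))) ∧
    -- expected profit is the same share of the efficient social surplus, for every μ
    (∀ μ : Measure ℝ, IsProbabilityMeasure μ → μ (Set.Iio 0) = 0 →
      Integrable (fun v => (η - 1) / η * v ^ (η / (η - 1))) μ →
      ∫ v, (T v - Q v ^ η / η) ∂μ
        = η ^ (-(η / (η - 1))) * ∫ v, (η - 1) / η * v ^ (η / (η - 1)) ∂μ) := by
  have hη0 : (0:ℝ) < η := lt_trans one_pos hη
  have hη1 : (0:ℝ) < η - 1 := sub_pos.mpr hη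
  set a : ℝ := 1 / (η - 1) with ha
  set b : ℝ := η / (η - 1) with hb
  have ha0 : 0 < a := by positivity
  have hb0 : 0 < b := by positivity
  have hba : b = a + 1 := by rw [ha, hb]; field_simp; ring
  have haη : a * η = b := by rw [ha, hb]; ring
  have hηb0 : (0:ℝ) < η ^ b := Real.rpow_pos_of_pos hη0 b
  have hηa0 : (0:ℝ) < η ^ a := Real.rpow_pos_of_pos hη0 a
  have hηab : η ^ a * η = η ^ b := by
    rw [hba, Real.rpow_add hη0, Real.rpow_one]
  -- basic rewrites
  have hT_eq : ∀ v : ℝ, 0 ≤ v → T v = v ^ b * (η ^ b)⁻¹ := by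
    intro v hv
    rw [hT v, Real.div_rpow hv hη0.le, div_eq_mul_inv]
  have hvQ : ∀ v : ℝ, 0 ≤ v → v * Q v = v ^ b * (η ^ a)⁻¹ := by
    intro v hv
    rw [hQ v, Real.div_rpow hv hη0.le, div_eq_mul_inv, ← mul_assoc]
    congr 1
    rw [hba, add_comm, Real.rpow_add' hv (by rw [add_comm, ← hba]; exact hb0.ne'),
      Real.rpow_one]
  have hQη : ∀ v : ℝ, 0 ≤ v → Q v ^ η = T v := by
    intro v hv
    rw [hQ v, hT v, ← Real.rpow_mul (div_nonneg hv hη0.le), haη]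
  have hsurplus : ∀ v : ℝ, 0 ≤ v →
      v * Q v - T v = (η - 1) * (v ^ b * (η ^ b)⁻¹) := by
    intro v hv
    rw [hvQ v hv, hT_eq v hv, ← hηab]
    field_simp
  -- Young's inequality: the key IC inequality
  have hconj : Real.HolderConjugate η b := by
    refine ⟨?_, hη0, hb0⟩
    rw [hb, inv_div, inv_one]
    field_simp
    ring
  have hkey : ∀ v u : ℝ, 0 ≤ v → 0 ≤ u →
      v * u - u ^ η ≤ (η - 1) * (v ^ b * (η ^ b)⁻¹) := by
    intro v u hv hu
    have hw : (0:ℝ) ≤ v / η := div_nonneg hv hη0.le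
    have h := Real.young_inequality_of_nonneg hu hw hconj
    have h2 := mul_le_mul_of_nonneg_left h hη0.le
    have hL : η * (u * (v / η)) = v * u := by field_simp
    have hηdb : η / b = η - 1 := by rw [hb]; field_simp
    have hR : η * (u ^ η / η + (v / η) ^ b / b)
        = u ^ η + (η - 1) * ((v / η) ^ b) := by
      rw [mul_add, mul_div_cancel₀ _ hη0.ne']
      congr 1
      rw [← hηdb]; ring
    rw [hL, hR, Real.div_rpow hv hη0.le, div_eq_mul_inv] at h2
    linarith
  -- envelope formula
  have henv : ∀ v : ℝ, 0 ≤ v → T v = v * Q v - ∫ s in (0:ℝ)..v, Q s := by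
    intro v hv
    have hint : (∫ s in (0:ℝ)..v, Q s) = v ^ b * (η ^ a)⁻¹ * b⁻¹ := by
      have h1 : Set.EqOn Q (fun s => s ^ a * (η ^ a)⁻¹) (Set.uIcc (0:ℝ) v) := by
        intro s hs
        rw [Set.uIcc_of_le hv] at hs
        rw [hQ s, Real.div_rpow hs.1 hη0.le, div_eq_mul_inv]
      rw [intervalIntegral.integral_congr h1, intervalIntegral.integral_mul_const,
        integral_rpow (Or.inl (by linarith : (-1:ℝ) < a)),
        Real.zero_rpow (by rw [← hba]; exact hb0.ne'), ← hba, sub_zero]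
      ring
    rw [hint, hT_eq v hv, hvQ v hv, ← hηab]
    have hbinv : b⁻¹ = 1 - η⁻¹ := by rw [hb, inv_div]; field_simp
    rw [hbinv, mul_inv]
    ring
  -- per-type profit
  have hprofit : ∀ v : ℝ, 0 ≤ v →
      T v - Q v ^ η / η = η ^ (-b) * ((η - 1) / η * v ^ b) := by
    intro v hv
    rw [hQη v hv, hT_eq v hv, Real.rpow_neg hη0.le]
    field_simp
  refine ⟨henv, ?_, ?_, hprofit, ?_⟩
  · -- IC
    intro v v' hv hv'
    have hu : 0 ≤ Q v' := by rw [hQ v']; exact Real.rpow_nonneg (div_nonneg hv' hη0.le) _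
    have h := hkey v (Q v') hv hu
    rw [hQη v' hv'] at h
    rw [hsurplus v hv]
    linarith
  · -- IR
    intro v hv
    rw [hsurplus v hv]
    have : 0 ≤ v ^ b := Real.rpow_nonneg hv _
    positivity
  · -- integral
    intro μ hprob hμ0 hint
    have h0 : ∀ᵐ v ∂μ, 0 ≤ v := by
      rw [MeasureTheory.ae_iff]
      simpa [Set.Iio, not_le] using hμ0
    have heq : (fun v => T v - Q v ^ η / η)
        =ᵐ[μ] fun v => η ^ (-b) * ((η - 1) / η * v ^ b) :=
      h0.mono fun v hv => hprofit v hv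
    rw [integral_congr_ae heq, MeasureTheory.integral_const_mul]
end

section
/- Fix a real η > 1. For a Borel probability measure μ on [0,∞) with 0 < S_μ < ∞, let Π_μ denote the supremum of ∫ (T(v) − Q(v)^η/η) dμ(v) over all incentive-compatible, individually rational direct mechanisms (Q, T) with measurable Q, T for which this integral is well defined. Then (i) Π_μ ≥ η^{−η/(η−1)}·S_μ for every such μ, and (ii) the infimum over all such μ of the ratio Π_μ/S_μ equals exactly η^{−η/(η−1)} (in particular, for every ε > 0 there exists such a μ with Π_μ/S_μ < η^{−η/(η−1)} + ε). -/
open Real Set MeasureTheory Finset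
open scoped ENNReal NNReal

/-- The efficient (first-best) surplus at value `v` in the quality-discrimination
model with cost `c q = q ^ η / η`: `s v = ((η - 1)/η) * v ^ (η/(η-1))`. -/
noncomputable def effSurplus (η : ℝ) (v : ℝ) : ℝ := (η - 1) / η * v ^ (η / (η - 1))

/-- The set of expected profits achievable by incentive-compatible, individually
rational direct mechanisms `(Q, T)` (with measurable `Q`, `T` and well-defined
profit integral) when the value distribution is `μ`. -/
def profitSet (η : ℝ) (μ : Measure ℝ) : Set ℝ :=
  {x | ∃ Q T : ℝ → ℝ, Measurable Q ∧ Measurable T ∧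
    (∀ v : ℝ, 0 ≤ v → 0 ≤ Q v) ∧
    (∀ v v' : ℝ, 0 ≤ v → 0 ≤ v' → v * Q v' - T v' ≤ v * Q v - T v) ∧
    (∀ v : ℝ, 0 ≤ v → 0 ≤ v * Q v - T v) ∧
    Integrable (fun v => T v - Q v ^ η / η) μ ∧
    x = ∫ v, (T v - Q v ^ η / η) ∂μ}

lemma aux_conj {η : ℝ} (hη : 1 < η) : (η/(η-1)).HolderConjugate η := by
  exact ((Real.holderConjugate_iff_eq_conjExponent hη).2 rfl).symm

lemma effSurplus_eq_div {η : ℝ} (hη : 1 < η) (x : ℝ) :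
    effSurplus η x = x ^ (η/(η-1)) / (η/(η-1)) := by
  have h1 : η - 1 ≠ 0 := by intro h; linarith
  have h2 : η ≠ 0 := by intro h; linarith
  unfold effSurplus
  field_simp

lemma young {η : ℝ} (hη : 1 < η) {x q : ℝ} (hx : 0 ≤ x) (hq : 0 ≤ q) :
    x * q - q ^ η / η ≤ effSurplus η x := by
  have h := Real.young_inequality_of_nonneg hx hq (aux_conj hη)
  rw [effSurplus_eq_div hη]
  linarith

lemma effSurplus_nonneg {η : ℝ} (hη : 1 < η) {x : ℝ} (hx : 0 ≤ x) :
    0 ≤ effSurplus η x :=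
  mul_nonneg (div_nonneg (by linarith) (by linarith)) (Real.rpow_nonneg hx _)

lemma ae_nonneg_of_Iio {μ : Measure ℝ} (h0 : μ (Set.Iio 0) = 0) : ∀ᵐ v ∂μ, 0 ≤ v := by
  rw [ae_iff]
  have : {v : ℝ | ¬ 0 ≤ v} = Set.Iio 0 := by ext v; simp
  rw [this]; exact h0

lemma zero_mem_profitSet {η : ℝ} (hη : 1 < η) (μ : Measure ℝ) : (0:ℝ) ∈ profitSet η μ := by
  have hfun : (fun v : ℝ => (0:ℝ) - (0:ℝ) ^ η / η) = fun _ => (0:ℝ) := by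
    funext v; rw [Real.zero_rpow (ne_of_gt (by linarith : (0:ℝ) < η))]; simp
  refine ⟨fun _ => 0, fun _ => 0, measurable_const, measurable_const,
    fun v _ => le_refl 0, fun v v' _ _ => le_refl _, fun v _ => by simp, ?_, ?_⟩
  · rw [hfun]; exact integrable_zero _ _ μ
  · rw [hfun]; rw [integral_zero]

lemma lower_bound {η : ℝ} (hη : 1 < η) (μ : Measure ℝ) (h0 : μ (Set.Iio 0) = 0)
    (hint : Integrable (effSurplus η) μ) :
    η ^ (-(η / (η - 1))) * ∫ v, effSurplus η v ∂μ ≤ sSup (profitSet η μ) := by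
  have hη0 : (0:ℝ) < η := by linarith
  have hη1 : η - 1 ≠ 0 := by intro h; linarith
  have hηne : η ≠ 0 := ne_of_gt hη0
  have hae : ∀ᵐ v ∂μ, 0 ≤ v := ae_nonneg_of_Iio h0
  -- bounded above
  have hbdd : BddAbove (profitSet η μ) := by
    refine ⟨∫ v, effSurplus η v ∂μ, ?_⟩
    rintro x ⟨Q, T, hQm, hTm, hQ0, hIC, hIR, hInt, rfl⟩
    refine integral_mono_ae hInt hint ?_
    filter_upwards [hae] with v hv
    have h1 : T v ≤ v * Q v := by linarith [hIR v hv]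
    calc T v - Q v ^ η / η ≤ v * Q v - Q v ^ η / η := by linarith
    _ ≤ effSurplus η v := young hη hv (hQ0 v hv)
  -- the linear-quality mechanism
  set b : ℝ := (η - 1)⁻¹ with hb
  have hb0 : 0 < b := by rw [hb]; exact inv_pos.2 (by linarith)
  set l : ℝ := η ^ (-b) with hl
  have hl0 : 0 < l := Real.rpow_pos_of_pos hη0 _
  have hab : 1 + b = η/(η-1) := by rw [hb]; field_simp; ring
  have hbη : b * η = η/(η-1) := by rw [hb]; field_simp
  set Q0 : ℝ → ℝ := fun v => l * (max v 0) ^ b with hQ0def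
  set T0 : ℝ → ℝ := fun v => l / η * (max v 0) ^ (η/(η-1)) with hT0def
  have hQM : Measurable Q0 :=
    (continuous_const.mul ((continuous_id.max continuous_const).rpow_const
      fun _ => Or.inr hb0.le)).measurable
  have hTM : Measurable T0 :=
    (continuous_const.mul ((continuous_id.max continuous_const).rpow_const
      fun _ => Or.inr (le_of_lt (div_pos hη0 (by linarith))))).measurable
  have hmax : ∀ v : ℝ, 0 ≤ v → max v 0 = v := fun v hv => max_eq_left hv
  have key1 : ∀ v : ℝ, 0 ≤ v → v * Q0 v - T0 v = l * ((η-1)/η) * v ^ (η/(η-1)) := by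
    intro v hv
    simp only [hQ0def, hT0def, hmax v hv]
    have h2 : v * (l * v ^ b) = l * v ^ (1 + b) := by
      rw [Real.rpow_one_add' hv (by rw [hab]; positivity)]; ring
    rw [h2, hab]
    field_simp
  have keyY : ∀ v v' : ℝ, 0 ≤ v → 0 ≤ v' →
      v * v' ^ b ≤ (η-1)/η * v ^ (η/(η-1)) + v' ^ (η/(η-1)) / η := by
    intro v v' hv hv'
    have h := Real.young_inequality_of_nonneg hv (Real.rpow_nonneg hv' b) (aux_conj hη)
    have h2 : (v' ^ b) ^ η = v' ^ (η/(η-1)) := by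
      rw [← Real.rpow_mul hv', hbη]
    have h3 : v ^ (η/(η-1)) / (η/(η-1)) = (η-1)/η * v ^ (η/(η-1)) := by
      field_simp
    rw [h2, h3] at h
    linarith
  have hIC : ∀ v v' : ℝ, 0 ≤ v → 0 ≤ v' → v * Q0 v' - T0 v' ≤ v * Q0 v - T0 v := by
    intro v v' hv hv'
    rw [key1 v hv]
    simp only [hQ0def, hT0def, hmax v' hv']
    have h := keyY v v' hv hv'
    have h2 := mul_le_mul_of_nonneg_left h hl0.le
    calc v * (l * v' ^ b) - l / η * v' ^ (η/(η-1))
        = l * (v * v' ^ b) - l / η * v' ^ (η/(η-1)) := by ring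
      _ ≤ l * ((η-1)/η * v ^ (η/(η-1)) + v' ^ (η/(η-1)) / η) - l / η * v' ^ (η/(η-1)) := by
          linarith
      _ = l * ((η-1)/η) * v ^ (η/(η-1)) := by ring
  have hIR : ∀ v : ℝ, 0 ≤ v → 0 ≤ v * Q0 v - T0 v := by
    intro v hv
    rw [key1 v hv]
    have h1 : (0:ℝ) ≤ v ^ (η/(η-1)) := Real.rpow_nonneg hv _
    have h2 : (0:ℝ) ≤ (η-1)/η := div_nonneg (by linarith) (by linarith)
    exact mul_nonneg (mul_nonneg hl0.le h2) h1
  have hQnn : ∀ v : ℝ, 0 ≤ v → 0 ≤ Q0 v := by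
    intro v hv
    exact mul_nonneg hl0.le (Real.rpow_nonneg (le_max_right v 0) b)
  -- l ^ η = l * η⁻¹ and the constant
  have hlη : l ^ η = l * η⁻¹ := by
    rw [hl, ← Real.rpow_mul hη0.le]
    have he : (-b) * η = (-b) + (-1) := by rw [neg_mul, hbη, ← hab]; ring
    rw [he, Real.rpow_add hη0, Real.rpow_neg_one]
  have hc : η ^ (-(η/(η-1))) = l * η⁻¹ := by
    rw [hl, ← Real.rpow_neg_one η, ← Real.rpow_add hη0]
    congr 1
    rw [← hab]; ring
  have key3 : ∀ v : ℝ, 0 ≤ v →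
      T0 v - Q0 v ^ η / η = η ^ (-(η/(η-1))) * effSurplus η v := by
    intro v hv
    simp only [hQ0def, hT0def, hmax v hv]
    have h1 : (l * v ^ b) ^ η = l ^ η * v ^ (η/(η-1)) := by
      rw [Real.mul_rpow hl0.le (Real.rpow_nonneg hv b), ← Real.rpow_mul hv, hbη]
    rw [h1, hlη, hc]
    unfold effSurplus
    field_simp
  -- membership
  have heq : (fun v => T0 v - Q0 v ^ η / η) =ᵐ[μ]
      (fun v => η ^ (-(η/(η-1))) * effSurplus η v) := by
    filter_upwards [hae] with v hv
    exact key3 v hv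
  have hInt2 : Integrable (fun v => T0 v - Q0 v ^ η / η) μ :=
    (hint.const_mul _).congr heq.symm
  have hIntEq : ∫ v, (T0 v - Q0 v ^ η / η) ∂μ
      = η ^ (-(η/(η-1))) * ∫ v, effSurplus η v ∂μ := by
    rw [integral_congr_ae heq, integral_const_mul]
  refine le_csSup hbdd ?_
  exact ⟨Q0, T0, hQM, hTM, hQnn, hIC, hIR, hInt2, hIntEq.symm⟩

lemma ratio_witness {η : ℝ} (hη : 1 < η) {ε : ℝ} (hε : 0 < ε) :
    ∃ μ : Measure ℝ, IsProbabilityMeasure μ ∧ μ (Set.Iio 0) = 0 ∧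
      Integrable (effSurplus η) μ ∧ 0 < (∫ v, effSurplus η v ∂μ) ∧
      sSup (profitSet η μ) / ∫ v, effSurplus η v ∂μ < η ^ (-(η/(η-1))) + ε := by
  have hη0 : (0:ℝ) < η := by linarith
  set a : ℝ := η/(η-1) with hadef
  have ha1 : 1 < a := by rw [hadef, lt_div_iff₀ (by linarith)]; linarith
  have ha0 : (0:ℝ) < a := by linarith
  set k : ℝ := (η-1)/η with hkdef
  have hk0 : 0 < k := by rw [hkdef]; exact div_pos (by linarith) hη0
  have heff : ∀ x : ℝ, effSurplus η x = k * x ^ a := fun x => rfl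
  -- Step 2: choose ρ
  have hgc : ContinuousAt (fun ρ : ℝ => (1 - ρ ^ (1-a)/a) ^ a) 1 := by
    have h1 : ContinuousAt (fun ρ : ℝ => ρ ^ (1-a)) 1 :=
      Real.continuousAt_rpow_const 1 (1-a) (Or.inl one_ne_zero)
    exact (continuousAt_const.sub (h1.div_const a)).rpow_const (Or.inr ha0.le)
  have hgval : (1 - (1:ℝ) ^ (1-a)/a) ^ a = η ^ (-a) := by
    rw [Real.one_rpow]
    have h1 : (1:ℝ) - 1/a = η⁻¹ := by rw [hadef]; field_simp; ring
    rw [show (1:ℝ) - 1 / a = η⁻¹ from h1, Real.inv_rpow hη0.le, ← Real.rpow_neg hη0.le]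
  obtain ⟨ρ, hρ1, hρg⟩ : ∃ ρ : ℝ, 1 < ρ ∧ (1 - ρ ^ (1-a)/a) ^ a < η ^ (-a) + ε/2 := by
    have htt : Filter.Tendsto (fun ρ : ℝ => (1 - ρ ^ (1-a)/a) ^ a) (nhdsWithin 1 (Set.Ioi 1))
        (nhds (η ^ (-a))) := by
      have := hgc.tendsto
      rw [hgval] at this
      exact this.mono_left nhdsWithin_le_nhds
    have hev : ∀ᶠ ρ in nhdsWithin (1:ℝ) (Set.Ioi 1), (1 - ρ ^ (1-a)/a) ^ a < η ^ (-a) + ε/2 :=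
      htt.eventually_lt_const (by linarith)
    obtain ⟨ρ, hmem, hlt⟩ := (eventually_mem_nhdsWithin.and hev).exists
    exact ⟨ρ, hmem, hlt⟩
  have hρ0 : (0:ℝ) < ρ := by linarith
  set w : ℝ := ρ ^ (-a) with hwdef
  have hw0 : 0 < w := Real.rpow_pos_of_pos hρ0 _
  have hw1 : w < 1 := Real.rpow_lt_one_of_one_lt_of_neg hρ1 (by linarith)
  have hwρ : w * ρ ^ a = 1 := by
    rw [hwdef, ← Real.rpow_add hρ0, neg_add_cancel, Real.rpow_zero]
  set D : ℝ := ρ ^ a - 1 with hDdef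
  have hρa1 : 1 < ρ ^ a := by
    calc (1:ℝ) < ρ := hρ1
    _ = ρ ^ (1:ℝ) := (Real.rpow_one ρ).symm
    _ ≤ ρ ^ a := Real.rpow_le_rpow_of_exponent_le hρ1.le ha1.le
  have hD0 : 0 < D := by rw [hDdef]; linarith
  set β : ℝ := 1 - (ρ-1)/D with hβdef
  have hρρa : ρ ≤ ρ ^ a := by
    calc ρ = ρ ^ (1:ℝ) := (Real.rpow_one ρ).symm
    _ ≤ ρ ^ a := Real.rpow_le_rpow_of_exponent_le hρ1.le ha1.le
  have hβ0 : 0 ≤ β := by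
    rw [hβdef, sub_nonneg, div_le_one hD0, hDdef]
    linarith
  have hρw : ρ * w = ρ ^ (1-a) := by
    rw [hwdef, show (1:ℝ) - a = 1 + (-a) by ring, Real.rpow_add hρ0, Real.rpow_one]
  have hβa : β ^ a ≤ (1 - ρ ^ (1-a)/a) ^ a := by
    have hs : (-1:ℝ) ≤ (1-ρ)/ρ := by
      rw [le_div_iff₀ hρ0]; linarith
    have hB := one_add_mul_self_le_rpow_one_add hs ha1.le
    have h1ρ : (1:ℝ) + (1-ρ)/ρ = ρ⁻¹ := by field_simp; ring
    rw [h1ρ, Real.inv_rpow hρ0.le, ← Real.rpow_neg hρ0.le] at hB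
    -- hB : 1 + a * ((1-ρ)/ρ) ≤ ρ ^ (-a) = w
    have hB2 : ρ + a * (1-ρ) ≤ ρ ^ (1-a) := by
      rw [← hρw]
      have := mul_le_mul_of_nonneg_left hB hρ0.le
      calc ρ + a * (1-ρ) = ρ * (1 + a * ((1-ρ)/ρ)) := by field_simp
      _ ≤ ρ * w := by rw [hwdef]; exact this
    have hle : β ≤ 1 - ρ ^ (1-a)/a := by
      rw [hβdef, sub_le_sub_iff_left, div_le_div_iff₀ ha0 hD0]
      have hρ1a : ρ ^ (1-a) * ρ ^ a = ρ := by
        rw [← Real.rpow_add hρ0]; norm_num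
      have h3 : ρ ^ (1-a) * D = ρ - ρ ^ (1-a) := by rw [hDdef, mul_sub, hρ1a]; ring
      rw [h3]
      linarith
    exact Real.rpow_le_rpow hβ0 hle ha0.le
  -- Step 4: choose n
  obtain ⟨n, hn⟩ : ∃ n : ℕ, 2/ε < (1-w)*n + 1 := by
    obtain ⟨n, hn⟩ := exists_nat_gt ((2/ε)/(1-w))
    refine ⟨n, ?_⟩
    have h1w : (0:ℝ) < 1 - w := by linarith
    rw [div_lt_iff₀ h1w] at hn
    nlinarith
  have hN0 : (0:ℝ) ≤ (1-w)*n := mul_nonneg (by linarith) n.cast_nonneg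
  have hNp : (0:ℝ) < (1-w)*n + 1 := by linarith
  have hrecip : 1/((1-w)*n+1) < ε/2 := by
    rw [div_lt_iff₀ hNp]
    have hn2 : 2 < ((1-w)*n+1) * ε := by
      rw [div_lt_iff₀ hε] at hn; linarith
    linarith
  -- Step 5: the discrete measure
  set p : ℕ → ℝ := fun i => if i = n then w^n else w^i * (1-w) with hpdef
  have hp0 : ∀ i, 0 ≤ p i := by
    intro i
    rw [hpdef]
    dsimp only
    split
    · positivity
    · have : (0:ℝ) ≤ 1 - w := by linarith
      positivity
  have hpn : p n = w^n := by rw [hpdef]; simp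
  have hplt : ∀ i, i < n → p i = w^i * (1-w) := by
    intro i hi; rw [hpdef]; simp [Nat.ne_of_lt hi]
  have hv0 : ∀ i : ℕ, (0:ℝ) < ρ^i := fun i => pow_pos hρ0 i
  set μ : Measure ℝ := ∑ i ∈ Finset.range (n+1), ENNReal.ofReal (p i) • Measure.dirac (ρ^i)
    with hμdef
  have hsum1 : ∑ i ∈ Finset.range (n+1), p i = 1 := by
    rw [Finset.sum_range_succ, Finset.sum_congr rfl (fun i hi => hplt i (Finset.mem_range.1 hi)),
      hpn, ← Finset.sum_mul]
    have hg := geom_sum_mul w n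
    linear_combination -hg
  have hprob : IsProbabilityMeasure μ := by
    constructor
    rw [hμdef, Measure.finset_sum_apply]
    simp only [Measure.smul_apply, smul_eq_mul, measure_univ, mul_one]
    rw [← ENNReal.ofReal_sum_of_nonneg (fun i _ => hp0 i), hsum1, ENNReal.ofReal_one]
  have hIio : μ (Set.Iio 0) = 0 := by
    rw [hμdef, Measure.finset_sum_apply]
    refine Finset.sum_eq_zero fun i _ => ?_
    rw [Measure.smul_apply, Measure.dirac_apply' _ measurableSet_Iio,
      Set.indicator_of_notMem (by simp [not_lt.2 (hv0 i).le]), smul_zero]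
  have hIntAll : ∀ f : ℝ → ℝ, Measurable f → Integrable f μ := by
    intro f hf
    rw [hμdef]
    refine integrable_finset_sum_measure.2 fun i _ => ?_
    refine Integrable.smul_measure ?_ ENNReal.ofReal_ne_top
    exact ⟨hf.aestronglyMeasurable, by rw [HasFiniteIntegral, lintegral_dirac]; exact ENNReal.coe_lt_top⟩
  have hEq : ∀ f : ℝ → ℝ, Integrable f μ →
      ∫ v, f v ∂μ = ∑ i ∈ Finset.range (n+1), p i * f (ρ^i) := by
    intro f hf
    rw [hμdef] at hf ⊢
    rw [integral_finset_sum_measure (integrable_finset_sum_measure.1 hf)]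
    refine Finset.sum_congr rfl fun i _ => ?_
    rw [integral_smul_measure, integral_dirac, ENNReal.toReal_ofReal (hp0 i), smul_eq_mul]
  have hMeff : Measurable (effSurplus η) := by
    unfold effSurplus
    exact (continuous_const.mul (Real.continuous_rpow_const
      (le_of_lt (div_pos hη0 (by linarith))))).measurable
  have hIntEff : Integrable (effSurplus η) μ := hIntAll _ hMeff
  -- values
  have hvia : ∀ i : ℕ, ((ρ:ℝ)^i) ^ a = (w ^ i)⁻¹ := by
    intro i
    have hρaw : ρ ^ a = w⁻¹ := by
      field_simp
      linarith [hwρ]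
    rw [← Real.rpow_natCast ρ i, ← Real.rpow_mul hρ0.le, mul_comm, Real.rpow_mul hρ0.le,
      Real.rpow_natCast, hρaw, inv_pow]
  have hSval : ∫ v, effSurplus η v ∂μ = k * ((1-w)*n + 1) := by
    rw [hEq _ hIntEff, Finset.sum_range_succ]
    have hterm : ∀ i ∈ Finset.range n, p i * effSurplus η (ρ^i) = k * (1-w) := by
      intro i hi
      rw [hplt i (Finset.mem_range.1 hi), heff, hvia i]
      have hwi : (w:ℝ)^i ≠ 0 := pow_ne_zero i hw0.ne'
      field_simp
    rw [Finset.sum_congr rfl hterm, hpn, heff, hvia n, Finset.sum_const, Finset.card_range,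
      nsmul_eq_mul]
    have hwn : (w:ℝ)^n ≠ 0 := pow_ne_zero n hw0.ne'
    field_simp
  have hSpos : 0 < ∫ v, effSurplus η v ∂μ := by
    rw [hSval]
    exact mul_pos hk0 hNp
  -- Step 6: upper bound on all achievable profits
  have hwD : w * D = 1 - w := by rw [hDdef]; linear_combination hwρ
  have hβv : ∀ i : ℕ, i < n → (ρ^(i+1) - ρ^i) * w^(i+1) = p i * ((1-β) * ρ^i) := by
    intro i hi
    rw [hplt i hi, hβdef]
    have h4 : (1:ℝ) - (1 - (ρ-1)/D) = (ρ-1)/D := by ring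
    rw [h4]
    field_simp
    linear_combination (ρ^i * w^i * (ρ-1)) * hwD
  clear_value a k w D β p μ
  have hub : ∀ x ∈ profitSet η μ, x ≤ β^a * k * ((1-w)*n) + k := by
    rintro x ⟨Q, T, hQm, hTm, hQnn, hIC, hIR, hIntx, rfl⟩
    have hq0 : ∀ i : ℕ, 0 ≤ Q (ρ^i) := fun i => hQnn _ (hv0 i).le
    -- chain of IC constraints
    have h1 : ∀ i : ℕ, ∑ j ∈ Finset.range i, (ρ^(j+1) - ρ^j) * Q (ρ^j)
        ≤ ρ^i * Q (ρ^i) - T (ρ^i) := by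
      intro i
      induction i with
      | zero => simpa using hIR (ρ^0) (hv0 0).le
      | succ i ih =>
        have hic := hIC (ρ^(i+1)) (ρ^i) (hv0 _).le (hv0 _).le
        rw [Finset.sum_range_succ]
        have h5 : ρ^(i+1) * Q (ρ^i) - T (ρ^i)
            = (ρ^i * Q (ρ^i) - T (ρ^i)) + (ρ^(i+1) - ρ^i) * Q (ρ^i) := by ring
        linarith
    -- tail sums of the probabilities
    have htail : ∀ m : ℕ, m ≤ n → ∑ j ∈ Finset.Ico m (n+1), p j = w^m := by
      intro m hm
      rw [Finset.sum_Ico_succ_top hm, hpn]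
      have hcong : ∀ j ∈ Finset.Ico m n, p j = w^j * (1-w) := fun j hj =>
        hplt j (Finset.mem_Ico.1 hj).2
      rw [Finset.sum_congr rfl hcong, ← Finset.sum_mul, geom_sum_Ico hw1.ne hm]
      have hw1' : w - 1 ≠ 0 := by linarith
      field_simp
      ring
    -- sum exchange
    have hswap : ∑ i ∈ Finset.range (n+1),
          p i * (∑ j ∈ Finset.range i, (ρ^(j+1) - ρ^j) * Q (ρ^j))
        = ∑ i ∈ Finset.range n, (ρ^(i+1) - ρ^i) * Q (ρ^i) * w^(i+1) := by
      have hcomm := Finset.sum_Ico_Ico_comm' 0 (n+1)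
        (fun i j => (ρ^(i+1) - ρ^i) * Q (ρ^i) * p j)
      simp only [← Finset.range_eq_Ico] at hcomm
      calc ∑ i ∈ Finset.range (n+1),
            p i * (∑ j ∈ Finset.range i, (ρ^(j+1) - ρ^j) * Q (ρ^j))
          = ∑ j ∈ Finset.range (n+1), ∑ i ∈ Finset.range j,
              (ρ^(i+1) - ρ^i) * Q (ρ^i) * p j := by
            refine Finset.sum_congr rfl fun j _ => ?_
            rw [Finset.mul_sum]
            exact Finset.sum_congr rfl fun i _ => by ring
        _ = ∑ i ∈ Finset.range (n+1), ∑ j ∈ Finset.Ico (i+1) (n+1),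
              (ρ^(i+1) - ρ^i) * Q (ρ^i) * p j := hcomm.symm
        _ = ∑ i ∈ Finset.range n, (ρ^(i+1) - ρ^i) * Q (ρ^i) * w^(i+1) := by
            rw [Finset.sum_range_succ]
            have hlast : ∑ j ∈ Finset.Ico (n+1) (n+1), (ρ^(n+1) - ρ^n) * Q (ρ^n) * p j = 0 := by
              simp
            rw [hlast, add_zero]
            refine Finset.sum_congr rfl fun i hi => ?_
            rw [← Finset.mul_sum, htail (i+1) (Nat.succ_le_of_lt (Finset.mem_range.1 hi))]
    have h2 : ∑ i ∈ Finset.range n, (ρ^(i+1) - ρ^i) * Q (ρ^i) * w^(i+1)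
        ≤ ∑ i ∈ Finset.range (n+1), p i * (ρ^i * Q (ρ^i) - T (ρ^i)) := by
      rw [← hswap]
      exact Finset.sum_le_sum fun i _ => mul_le_mul_of_nonneg_left (h1 i) (hp0 i)
    have hxval : ∫ v, (T v - Q v ^ η / η) ∂μ
        = ∑ i ∈ Finset.range (n+1), p i * (T (ρ^i) - Q (ρ^i) ^ η / η) := hEq _ hIntx
    rw [hxval]
    have hdec : ∑ i ∈ Finset.range (n+1), p i * (T (ρ^i) - Q (ρ^i) ^ η / η)
        = ∑ i ∈ Finset.range (n+1), p i * (ρ^i * Q (ρ^i) - Q (ρ^i) ^ η / η)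
          - ∑ i ∈ Finset.range (n+1), p i * (ρ^i * Q (ρ^i) - T (ρ^i)) := by
      rw [← Finset.sum_sub_distrib]
      exact Finset.sum_congr rfl fun i _ => by ring
    rw [hdec]
    -- termwise bounds
    have hterm : ∀ i ∈ Finset.range n,
        p i * (ρ^i * Q (ρ^i) - Q (ρ^i) ^ η / η) - (ρ^(i+1) - ρ^i) * Q (ρ^i) * w^(i+1)
          ≤ k * (1-w) * β^a := by
      intro i hi
      have hi' := Finset.mem_range.1 hi
      have hrw : p i * (ρ^i * Q (ρ^i) - Q (ρ^i) ^ η / η)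
            - (ρ^(i+1) - ρ^i) * Q (ρ^i) * w^(i+1)
          = p i * ((β * ρ^i) * Q (ρ^i) - Q (ρ^i) ^ η / η) := by
        linear_combination (-(Q (ρ^i))) * hβv i hi'
      rw [hrw]
      have hYi := young hη (mul_nonneg hβ0 (hv0 i).le) (hq0 i)
      have hle2 : p i * ((β * ρ^i) * Q (ρ^i) - Q (ρ^i) ^ η / η)
          ≤ p i * effSurplus η (β * ρ^i) := mul_le_mul_of_nonneg_left hYi (hp0 i)
      refine le_trans hle2 (le_of_eq ?_)
      rw [heff, Real.mul_rpow hβ0 (hv0 i).le, hvia i, hplt i hi']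
      have hwi : (w:ℝ)^i ≠ 0 := pow_ne_zero i hw0.ne'
      field_simp
    have hlastb : p n * (ρ^n * Q (ρ^n) - Q (ρ^n) ^ η / η) ≤ k := by
      have hYn := young hη (hv0 n).le (hq0 n)
      have h6 := mul_le_mul_of_nonneg_left hYn (hp0 n)
      refine le_trans h6 (le_of_eq ?_)
      rw [heff, hvia n, hpn]
      have hwn : (w:ℝ)^n ≠ 0 := pow_ne_zero n hw0.ne'
      field_simp
    have hsum_term := Finset.sum_le_sum hterm
    rw [Finset.sum_const, Finset.card_range, nsmul_eq_mul] at hsum_term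
    have hAC : ∑ i ∈ Finset.range n,
          (p i * (ρ^i * Q (ρ^i) - Q (ρ^i) ^ η / η) - (ρ^(i+1) - ρ^i) * Q (ρ^i) * w^(i+1))
        = ∑ i ∈ Finset.range n, p i * (ρ^i * Q (ρ^i) - Q (ρ^i) ^ η / η)
          - ∑ i ∈ Finset.range n, (ρ^(i+1) - ρ^i) * Q (ρ^i) * w^(i+1) :=
      Finset.sum_sub_distrib _ _
    rw [hAC] at hsum_term
    have hsplit : ∑ i ∈ Finset.range (n+1), p i * (ρ^i * Q (ρ^i) - Q (ρ^i) ^ η / η)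
        = ∑ i ∈ Finset.range n, p i * (ρ^i * Q (ρ^i) - Q (ρ^i) ^ η / η)
          + p n * (ρ^n * Q (ρ^n) - Q (ρ^n) ^ η / η) := Finset.sum_range_succ _ n
    have hfin : β^a * k * ((1-w)*n) + k = n * (k * (1-w) * β^a) + k := by ring
    rw [hfin]
    linarith [h2, hlastb, hsum_term, hsplit]
  have hsup : sSup (profitSet η μ) ≤ β^a * k * ((1-w)*n) + k :=
    csSup_le ⟨0, zero_mem_profitSet hη μ⟩ hub
  refine ⟨μ, hprob, hIio, hIntEff, hSpos, ?_⟩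
  rw [hSval]
  have hden : (0:ℝ) < k * ((1-w)*n + 1) := mul_pos hk0 hNp
  have hβa0 : 0 ≤ β^a := Real.rpow_nonneg hβ0 a
  have hd : sSup (profitSet η μ) / (k * ((1-w)*n + 1))
      ≤ (β^a * k * ((1-w)*n) + k) / (k * ((1-w)*n + 1)) := by
    gcongr
  have hfinal : (β^a * k * ((1-w)*n) + k) / (k * ((1-w)*n + 1)) ≤ β^a + 1/((1-w)*n+1) := by
    rw [div_le_iff₀ hden]
    have hexp : (β^a + 1/((1-w)*n+1)) * (k * ((1-w)*n + 1))
        = β^a * k * ((1-w)*n) + β^a * k + k := by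
      field_simp
    rw [hexp]
    linarith [mul_nonneg hβa0 hk0.le]
  have hβε : β^a < η ^ (-a) + ε/2 := lt_of_le_of_lt hβa hρg
  calc sSup (profitSet η μ) / (k * ((1-w)*n + 1))
      ≤ β^a + 1/((1-w)*n+1) := le_trans hd hfinal
    _ < (η ^ (-a) + ε/2) + ε/2 := by linarith
    _ = η ^ (-a) + ε := by ring


/-- (i) For every Borel probability measure `μ` on `[0, ∞)` with `0 < S_μ < ∞`, the
Bayes-optimal profit `Π_μ = sSup (profitSet η μ)` satisfies
`Π_μ ≥ η ^ (-η/(η-1)) * S_μ`; and (ii) the infimum over all such `μ` of the ratio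
`Π_μ / S_μ` equals exactly `η ^ (-η/(η-1))`. -/
theorem stmt_4 (η : ℝ) (hη : 1 < η) :
    (∀ μ : Measure ℝ, IsProbabilityMeasure μ → μ (Set.Iio 0) = 0 →
      Integrable (effSurplus η) μ → 0 < ∫ v, effSurplus η v ∂μ →
      η ^ (-(η / (η - 1))) * ∫ v, effSurplus η v ∂μ ≤ sSup (profitSet η μ)) ∧
    sInf {r : ℝ | ∃ μ : Measure ℝ, IsProbabilityMeasure μ ∧ μ (Set.Iio 0) = 0 ∧
        Integrable (effSurplus η) μ ∧ 0 < (∫ v, effSurplus η v ∂μ) ∧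
        r = sSup (profitSet η μ) / ∫ v, effSurplus η v ∂μ}
      = η ^ (-(η / (η - 1))) := by
  constructor
  · intro μ _ h0 hint _
    exact lower_bound hη μ h0 hint
  · set R := {r : ℝ | ∃ μ : Measure ℝ, IsProbabilityMeasure μ ∧ μ (Set.Iio 0) = 0 ∧
        Integrable (effSurplus η) μ ∧ 0 < (∫ v, effSurplus η v ∂μ) ∧
        r = sSup (profitSet η μ) / ∫ v, effSurplus η v ∂μ} with hR
    have hlb : ∀ r ∈ R, η ^ (-(η/(η-1))) ≤ r := by
      rintro r ⟨μ, hprob, h0, hint, hpos, rfl⟩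
      rw [le_div_iff₀ hpos]
      exact lower_bound hη μ h0 hint
    have hne : R.Nonempty := by
      obtain ⟨μ, h1, h2, h3, h4, _⟩ := ratio_witness hη (by norm_num : (0:ℝ) < 1)
      exact ⟨_, ⟨μ, h1, h2, h3, h4, rfl⟩⟩
    have hbdd : BddBelow R := ⟨_, hlb⟩
    refine le_antisymm ?_ (le_csInf hne hlb)
    refine le_of_forall_pos_le_add ?_
    intro ε hε
    obtain ⟨μ, h1, h2, h3, h4, h5⟩ := ratio_witness hη hε
    exact le_trans (csInf_le hbdd ⟨μ, h1, h2, h3, h4, rfl⟩) h5.le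
end

section
/- Fix a real η > 1 and a real α > η/(η−1), let P_α be the Pareto distribution with shape α, and set β = ((α−1)/α)^{η/(η−1)}. Define the mechanism Q_α(v) = (((α−1)/α)·v)^{1/(η−1)} and T_α(v) = v·Q_α(v) − ∫₁^v Q_α(s) ds for v ≥ 1. Then the expected profit satisfies ∫ (T_α(v) − Q_α(v)^η/η) dP_α(v) = β · S_{P_α}, and the expected consumer surplus satisfies ∫ (v·Q_α(v) − T_α(v)) dP_α(v) = (η/(η−1))·(β^{1/η} − β) · S_{P_α}. -/
open Real Set MeasureTheory
open scoped NNReal ENNReal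

/-- The Pareto distribution with shape `α`: the measure on `[1, ∞)` with density
`α * v ^ (-α - 1)` with respect to Lebesgue measure. -/
noncomputable def paretoMeasure (α : ℝ) : Measure ℝ :=
  (volume.restrict (Set.Ici (1 : ℝ))).withDensity
    (fun v => ENNReal.ofReal (α * v ^ (-α - 1)))

lemma pareto_transfer (α : ℝ) (hα : 0 < α) (g : ℝ → ℝ) :
    ∫ v, g v ∂(paretoMeasure α) = ∫ v in Ici (1:ℝ), α * v ^ (-α - 1) * g v := by
  have meas : Measurable fun v : ℝ => Real.toNNReal (α * v ^ (-α - 1)) := by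
    fun_prop
  rw [paretoMeasure]
  have h1 : (fun v : ℝ => ENNReal.ofReal (α * v ^ (-α-1)))
      = fun v => ((Real.toNNReal (α * v ^ (-α-1)) : ℝ≥0) : ℝ≥0∞) := rfl
  rw [h1, integral_withDensity_eq_integral_smul meas g]
  apply setIntegral_congr_fun measurableSet_Ici
  intro v hv
  have hv0 : (0:ℝ) < v := lt_of_lt_of_le zero_lt_one hv
  have : (0:ℝ) ≤ α * v ^ (-α - 1) := by positivity
  simp [NNReal.smul_def, Real.coe_toNNReal _ this]

lemma mom_integrable (α c : ℝ) (hα : 0 < α) (hc : c < α) :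
    IntegrableOn (fun v : ℝ => α * v ^ (-α - 1) * v ^ c) (Ici 1) := by
  rw [integrableOn_Ici_iff_integrableOn_Ioi]
  have h : IntegrableOn (fun v : ℝ => v ^ (c - α - 1)) (Ioi 1) :=
    integrableOn_Ioi_rpow_of_lt (by linarith) zero_lt_one
  apply IntegrableOn.congr_fun (h.const_mul α) _ measurableSet_Ioi
  intro v hv
  have hv0 : (0:ℝ) < v := lt_trans zero_lt_one hv
  show α * v ^ (c - α - 1) = α * v ^ (-α - 1) * v ^ c
  rw [mul_assoc, ← Real.rpow_add hv0]
  ring_nf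

lemma mom_integral (α c : ℝ) (hα : 0 < α) (hc : c < α) :
    ∫ v in Ici (1:ℝ), α * v ^ (-α - 1) * v ^ c = α / (α - c) := by
  rw [integral_Ici_eq_integral_Ioi]
  have : ∀ v ∈ Ioi (1:ℝ), α * v ^ (-α - 1) * v ^ c = α * v ^ (c - α - 1) := by
    intro v hv
    have hv0 : (0:ℝ) < v := lt_trans zero_lt_one hv
    rw [mul_assoc, ← Real.rpow_add hv0]
    ring_nf
  rw [setIntegral_congr_fun measurableSet_Ioi this, integral_const_mul,
    integral_Ioi_rpow_of_lt (by linarith) zero_lt_one]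
  rw [Real.one_rpow]
  have h3 : α - c ≠ 0 := sub_ne_zero.mpr (ne_of_gt (by linarith))
  have h4 : c - α - 1 + 1 ≠ 0 := by intro h; apply h3; linarith
  have h5 : (-1 : ℝ) / (c - α - 1 + 1) = 1 / (α - c) := by
    rw [div_eq_div_iff h4 h3]; ring
  rw [h5, mul_one_div]

lemma pareto_affine (α r A B : ℝ) (hα : 0 < α) (hrα : r < α) (g : ℝ → ℝ)
    (hg : ∀ v : ℝ, 1 ≤ v → g v = A * v ^ r + B) :
    ∫ v, g v ∂(paretoMeasure α) = A * (α / (α - r)) + B := by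
  rw [pareto_transfer α hα g]
  have heq : EqOn (fun v : ℝ => α * v ^ (-α - 1) * g v)
      (fun v : ℝ => A * (α * v ^ (-α - 1) * v ^ r) + B * (α * v ^ (-α - 1) * v ^ (0:ℝ)))
      (Ici 1) := by
    intro v hv
    simp only
    rw [hg v hv, Real.rpow_zero]
    ring
  rw [setIntegral_congr_fun measurableSet_Ici heq,
    integral_add ((mom_integrable α r hα hrα).const_mul A)
      ((mom_integrable α 0 hα hα).const_mul B),
    integral_const_mul, integral_const_mul, mom_integral α r hα hrα, mom_integral α 0 hα hα,
    sub_zero, div_self hα.ne']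
  ring

/-- For `η > 1`, `α > η/(η-1)` and `β = ((α-1)/α)^(η/(η-1))`, the mechanism
`Q_α v = (((α-1)/α) * v) ^ (1/(η-1))`, `T_α v = v * Q_α v - ∫₁ᵛ Q_α` generates
expected profit `β * S_{P_α}` and expected consumer surplus
`(η/(η-1)) * (β^(1/η) - β) * S_{P_α}` under the Pareto distribution `P_α`. -/
theorem stmt_6 (η α : ℝ) (hη : 1 < η) (hα : η / (η - 1) < α)
    (β : ℝ) (hβ : β = ((α - 1) / α) ^ (η / (η - 1)))
    (Q T : ℝ → ℝ)
    (hQ : ∀ v : ℝ, Q v = ((α - 1) / α * v) ^ (1 / (η - 1)))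
    (hT : ∀ v : ℝ, T v = v * Q v - ∫ s in (1 : ℝ)..v, Q s) :
    (∫ v, (T v - Q v ^ η / η) ∂(paretoMeasure α)
      = β * ∫ v, effSurplus η v ∂(paretoMeasure α)) ∧
    (∫ v, (v * Q v - T v) ∂(paretoMeasure α)
      = η / (η - 1) * (β ^ (1 / η) - β) * ∫ v, effSurplus η v ∂(paretoMeasure α)) := by
  have hη1 : (0:ℝ) < η - 1 := by linarith
  have hη0 : (0:ℝ) < η := by linarith
  set r : ℝ := η / (η - 1) with hr
  set p : ℝ := 1 / (η - 1) with hp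
  set k : ℝ := (α - 1) / α with hk
  have hr1 : 1 < r := by
    rw [hr, lt_div_iff₀ hη1]; linarith
  have hα1 : 1 < α := lt_trans hr1 hα
  have hα0 : 0 < α := by linarith
  have hk0 : 0 < k := by rw [hk]; exact div_pos (by linarith) hα0
  have hrp : r = p + 1 := by rw [hr, hp]; field_simp; ring
  have hpη : p * η = r := by rw [hr, hp]; field_simp
  have hαr : α - r ≠ 0 := sub_ne_zero.mpr (ne_of_gt hα)
  set K : ℝ := k ^ p with hK
  have hkr : k ^ r = K * k := by
    rw [hK, hrp, Real.rpow_add hk0, Real.rpow_one]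
  -- pointwise formulas for v ≥ 1
  have hQv : ∀ v : ℝ, 1 ≤ v → Q v = K * v ^ p := by
    intro v hv
    rw [hQ, hK, ← Real.mul_rpow hk0.le (by linarith : (0:ℝ) ≤ v), hp, hk]
  have hIv : ∀ v : ℝ, 1 ≤ v → (∫ s in (1:ℝ)..v, Q s) = K * ((v ^ r - 1) / r) := by
    intro v hv
    have h1 : EqOn Q (fun s => K * s ^ p) (uIcc 1 v) := by
      intro s hs
      rw [uIcc_of_le hv] at hs
      exact hQv s hs.1
    rw [intervalIntegral.integral_congr h1]
    rw [intervalIntegral.integral_const_mul]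
    have hp0 : 0 < p := by rw [hp]; exact one_div_pos.mpr hη1
    rw [integral_rpow (Or.inl (by linarith))]
    rw [Real.one_rpow, ← hrp]
  have hQη : ∀ v : ℝ, 1 ≤ v → Q v ^ η = K * k * v ^ r := by
    intro v hv
    have hv0 : (0:ℝ) ≤ v := by linarith
    rw [hQ, ← Real.rpow_mul (mul_nonneg hk0.le hv0), hpη,
      Real.mul_rpow hk0.le hv0, hkr]
  have hαr' : α - η / (η - 1) ≠ 0 := hαr
  have hprofit : ∀ v : ℝ, 1 ≤ v →
      T v - Q v ^ η / η = (K - K * k) / η * v ^ r + K / r := by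
    intro v hv
    have hv0 : (0:ℝ) < v := lt_of_lt_of_le zero_lt_one hv
    have hvr : v * v ^ p = v ^ r := by
      rw [hrp, Real.rpow_add hv0, Real.rpow_one]; ring
    rw [hT, hQη v hv, hQv v hv, hIv v hv,
      show v * (K * v ^ p) = K * (v * v ^ p) from by ring, hvr]
    rw [hr]
    field_simp
    ring
  have hcs : ∀ v : ℝ, 1 ≤ v →
      v * Q v - T v = K / r * v ^ r + (-(K / r)) := by
    intro v hv
    rw [hT, hIv v hv]
    ring
  have int1 := pareto_affine α r ((K - K * k) / η) (K / r) hα0 hα _ hprofit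
  have int2 := pareto_affine α r (K / r) (-(K / r)) hα0 hα _ hcs
  have intS : ∫ v, effSurplus η v ∂(paretoMeasure α)
      = (η - 1) / η * (α / (α - r)) + 0 := by
    apply pareto_affine α r _ _ hα0 hα
    intro v hv
    rw [effSurplus, add_zero, hr]
  have h6 : α * (η - 1) - η ≠ 0 := by
    intro h; apply hαr'; field_simp; linarith
  have h7 : α * η - α - η ≠ 0 := by intro h; apply h6; linarith
  have h8 : α * η - (α + η) ≠ 0 := by intro h; apply h6; linarith
  have hβK : β ^ (1 / η) = K := by
    rw [hβ, ← Real.rpow_mul hk0.le,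
      show r * (1 / η) = p from by rw [hr, hp]; field_simp, hK]
  constructor
  · rw [int1, intS, hβ, hkr, hr, hk]
    field_simp [hη0.ne', hη1.ne', hα0.ne', h6, h7, h8]
    ring
  · rw [int2, intS, hβK, hβ, hkr, hr, hk]
    field_simp [hη0.ne', hη1.ne', hα0.ne', h6, h7, h8, (show (η - 1) * α - η ≠ 0 by rwa [mul_comm])]
    ring
end

section
/- Let η̄ > 1 be real and let c : [0,∞) → ℝ satisfy: c(0) = 0, c is differentiable with c′(0) = 0, c′ is convex, strictly increasing, continuous with c′(q) → ∞ as q → ∞, c is twice differentiable on (0,∞) with c′′(q) > 0, and the cost elasticity satisfies q·c′(q)/c(q) ≤ η̄ for all q > 0. Set z = 1/(1 + √(η̄ − 1)). For each v > 0 let q_v and q*_v be the unique solutions of c′(q_v) = z·v and c′(q*_v) = v. Then the constant-markup profit satisfies ((1 − z)/z)·c(q_v) ≥ (1/(η̄ + 2·√(η̄ − 1))) · ∫₀^{q*_v} (v − c′(s)) ds; that is, the constant-markup selling strategy earns at least the fraction 1/(η̄ + 2√(η̄ − 1)) of the efficient surplus for every buyer type v. -/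
open Real Set MeasureTheory

lemma lin_integral (w m q0 p q : ℝ) :
    ∫ s in p..q, (w + m * (s - q0)) = w * (q - p) + m / 2 * ((q - q0)^2 - (p - q0)^2) := by
  have hF : ∀ s ∈ Set.uIcc p q,
      HasDerivAt (fun t => w * t + m / 2 * (t - q0)^2) (w + m * (s - q0)) s := by
    intro s _
    have h1 : HasDerivAt (fun t : ℝ => w * t) w s := by
      simpa using (hasDerivAt_id s).const_mul w
    have h2 : HasDerivAt (fun t : ℝ => (t - q0)^2) (2 * (s - q0)) s := by
      have h := ((hasDerivAt_id s).sub_const q0).pow 2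
      simp at h
      exact h
    have : HasDerivAt (fun t => w * t + m / 2 * (t - q0)^2) _ s := h1.add (h2.const_mul (m / 2))
    convert this using 1
    ring
  rw [intervalIntegral.integral_eq_sub_of_hasDerivAt hF
    (Continuous.intervalIntegrable (by continuity) _ _)]
  ring

set_option maxHeartbeats 1000000 in
/-- Profit guarantee of the constant-markup mechanism for a general convex cost `c`
with convex marginal cost `cd = c'`, `c 0 = 0`, `cd 0 = 0`, `cd` strictly increasing,
continuous and tending to `∞`, second derivative `cdd > 0` on `(0,∞)`, and cost
elasticity `q * cd q / c q ≤ η̄`.  With `z = 1/(1 + √(η̄ - 1))`, for every buyer type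
`v > 0`, if `q_v` solves `cd q_v = z * v` and `q*_v` solves `cd q*_v = v`, then the
constant-markup profit `((1 - z)/z) * c q_v` is at least the fraction
`1/(η̄ + 2√(η̄ - 1))` of the efficient surplus `∫₀^{q*_v} (v - cd s) ds`. -/
theorem stmt_8 (ηbar : ℝ) (hηbar : 1 < ηbar)
    (c cd cdd : ℝ → ℝ)
    (hc0 : c 0 = 0)
    (hderiv : ∀ q ∈ Set.Ici (0 : ℝ), HasDerivAt c (cd q) q)
    (hcd0 : cd 0 = 0)
    (hconv : ConvexOn ℝ (Set.Ici 0) cd)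
    (hmono : StrictMonoOn cd (Set.Ici 0))
    (hcont : ContinuousOn cd (Set.Ici 0))
    (htop : Filter.Tendsto cd Filter.atTop Filter.atTop)
    (hderiv2 : ∀ q ∈ Set.Ioi (0 : ℝ), HasDerivAt cd (cdd q) q)
    (hcddpos : ∀ q ∈ Set.Ioi (0 : ℝ), 0 < cdd q)
    (helast : ∀ q ∈ Set.Ioi (0 : ℝ), q * cd q / c q ≤ ηbar)
    (z : ℝ) (hz : z = 1 / (1 + Real.sqrt (ηbar - 1)))
    (v : ℝ) (hv : 0 < v)
    (qv qstar : ℝ) (hqv : 0 ≤ qv) (hqstar : 0 ≤ qstar)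
    (hqveq : cd qv = z * v) (hqstareq : cd qstar = v) :
    (1 / (ηbar + 2 * Real.sqrt (ηbar - 1))) * ∫ s in (0 : ℝ)..qstar, (v - cd s)
      ≤ (1 - z) / z * c qv := by
  set k : ℝ := Real.sqrt (ηbar - 1) with hkdef
  have hkpos : 0 < k := by rw [hkdef]; exact Real.sqrt_pos.mpr (by linarith)
  have hk2 : k ^ 2 = ηbar - 1 := by rw [hkdef]; exact Real.sq_sqrt (by linarith)
  clear_value k
  have h1k : (0:ℝ) < 1 + k := by linarith
  have hzpos : 0 < z := by rw [hz]; positivity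
  have hzk : z * (1 + k) = 1 := by rw [hz]; field_simp
  have hzlt1 : z < 1 := by nlinarith
  -- qv > 0
  have hqvpos : 0 < qv := by
    rcases lt_or_eq_of_le hqv with h | h
    · exact h
    · exfalso; rw [← h] at hqveq; rw [hcd0] at hqveq; nlinarith
  -- qv < qstar
  have hqvlt : qv < qstar := by
    by_contra h
    push_neg at h
    have := (hmono.monotoneOn) (mem_Ici.mpr hqstar) (mem_Ici.mpr hqv) h
    rw [hqveq, hqstareq] at this
    nlinarith
  -- cd nonneg
  have hcdnn : ∀ s ∈ Set.Ici (0:ℝ), 0 ≤ cd s := by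
    intro s hs
    rcases eq_or_lt_of_le (mem_Ici.mp hs) with h | h
    · rw [← h, hcd0]
    · have := hmono (mem_Ici.mpr le_rfl) hs h
      rw [hcd0] at this; exact this.le
  set m : ℝ := cdd qv with hmdef
  have hmderiv : HasDerivAt cd m qv := by
    rw [hmdef]; exact hderiv2 qv (mem_Ioi.mpr hqvpos)
  clear_value m
  -- z*v ≤ m*qv (slope of chord from 0 below derivative at qv)
  have hslope : z * v ≤ m * qv := by
    have := hconv.slope_le_of_hasDerivAt (mem_Ici.mpr le_rfl) (mem_Ici.mpr hqv) hqvpos hmderiv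
    rw [slope_def_field, hqveq, hcd0] at this
    rw [div_le_iff₀ (by linarith)] at this
    linarith [this]
  have hmpos : 0 < m := by
    have : 0 < z * v := by positivity
    nlinarith
  -- tangent line bound
  have htang : ∀ s ∈ Set.Ici (0:ℝ), z * v + m * (s - qv) ≤ cd s := by
    intro s hs
    rcases lt_trichotomy s qv with h | h | h
    · have := hconv.slope_le_of_hasDerivAt hs (mem_Ici.mpr hqv) h hmderiv
      rw [slope_def_field, hqveq] at this
      rw [div_le_iff₀ (by linarith)] at this
      nlinarith
    · rw [h, hqveq]; ring_nf; simp
    · have := hconv.le_slope_of_hasDerivAt (mem_Ici.mpr hqv) hs h hmderiv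
      rw [slope_def_field, hqveq] at this
      rw [le_div_iff₀ (by linarith)] at this
      nlinarith
  -- integrability of cd on subintervals of [0, qstar]
  have hint : ∀ p q : ℝ, 0 ≤ p → p ≤ q → IntervalIntegrable cd volume p q := by
    intro p q hp hpq
    apply ContinuousOn.intervalIntegrable
    apply hcont.mono
    intro x hx
    rw [uIcc_of_le hpq] at hx
    exact le_trans hp hx.1
  -- FTC
  have hftc : ∀ p q : ℝ, 0 ≤ p → p ≤ q → ∫ s in p..q, cd s = c q - c p := by
    intro p q hp hpq
    apply intervalIntegral.integral_eq_sub_of_hasDerivAt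
    · intro x hx
      rw [uIcc_of_le hpq] at hx
      exact hderiv x (mem_Ici.mpr (le_trans hp hx.1))
    · exact hint p q hp hpq
  set A : ℝ := c qv with hAdef
  clear_value A
  -- lower bound on A
  set a : ℝ := qv - z * v / m with hadef
  have haa : qv - a = z * v / m := by rw [hadef]; ring
  have haa2 : a - qv = -(z * v / m) := by rw [hadef]; ring
  clear_value a
  have ha0 : 0 ≤ a := by
    have h1 : z * v / m ≤ qv := by rw [div_le_iff₀ hmpos]; nlinarith
    linarith [haa2, h1, neg_le_neg h1]
  have haqv : a ≤ qv := by
    have : 0 ≤ z * v / m := by positivity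
    linarith [haa]
  have hca : 0 ≤ c a := by
    have h1 : ∫ s in (0:ℝ)..a, cd s = c a - c 0 := hftc 0 a le_rfl ha0
    have h2 : 0 ≤ ∫ s in (0:ℝ)..a, cd s := by
      apply intervalIntegral.integral_nonneg ha0
      intro u hu
      exact hcdnn u (mem_Ici.mpr hu.1)
    rw [h1, hc0] at h2
    linarith
  have hAlow : (z * v) ^ 2 ≤ 2 * m * A := by
    have h1 : ∫ s in a..qv, (z * v + m * (s - qv)) ≤ ∫ s in a..qv, cd s := by
      apply intervalIntegral.integral_mono_on haqv
      · exact Continuous.intervalIntegrable (by continuity) _ _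
      · exact hint a qv ha0 haqv
      · intro u hu
        exact htang u (mem_Ici.mpr (le_trans ha0 hu.1))
    rw [hftc a qv ha0 haqv, lin_integral] at h1
    have h2 : z * v * (qv - a) + m / 2 * ((qv - qv) ^ 2 - (a - qv) ^ 2)
        = (z * v) ^ 2 / (2 * m) := by
      rw [show qv - a = z * v / m from haa, haa2]
      have hm0 : m ≠ 0 := ne_of_gt hmpos
      field_simp
      ring
    rw [h2] at h1
    rw [div_le_iff₀ (by positivity : (0:ℝ) < 2 * m)] at h1
    nlinarith [hca]
  have hApos : 0 < A := by nlinarith [hAlow, mul_pos (mul_pos hzpos hv) (mul_pos hzpos hv)]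
  -- elasticity at qv
  have helastqv : qv * (z * v) ≤ ηbar * A := by
    have h0 : 0 < c qv := by rw [← hAdef]; exact hApos
    have := helast qv (mem_Ioi.mpr hqvpos)
    rw [hqveq, div_le_iff₀ h0] at this
    rw [hAdef]
    linarith
  -- tangent bound on [qv, qstar]
  have htail : A + (z * v * (qstar - qv) + m / 2 * (qstar - qv) ^ 2) ≤ c qstar := by
    have h1 : ∫ s in qv..qstar, (z * v + m * (s - qv)) ≤ ∫ s in qv..qstar, cd s := by
      apply intervalIntegral.integral_mono_on hqvlt.le
      · exact Continuous.intervalIntegrable (by continuity) _ _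
      · exact hint qv qstar hqv hqvlt.le
      · intro u hu
        exact htang u (mem_Ici.mpr (le_trans hqv hu.1))
    rw [hftc qv qstar hqv hqvlt.le, lin_integral] at h1
    nlinarith [h1]
  -- surplus identity
  have hS : ∫ s in (0:ℝ)..qstar, (v - cd s) = v * qstar - c qstar := by
    have h1 : ∫ s in (0:ℝ)..qstar, (v - cd s)
        = (∫ _ in (0:ℝ)..qstar, v) - ∫ s in (0:ℝ)..qstar, cd s :=
      intervalIntegral.integral_sub intervalIntegrable_const (hint 0 qstar le_rfl hqstar)
    rw [h1, intervalIntegral.integral_const, hftc 0 qstar le_rfl hqstar, hc0, smul_eq_mul]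
    ring
  rw [hS]
  -- final algebra
  have hveq : z * v * (1 + k) = v := by
    rw [mul_comm z v, mul_assoc, hzk, mul_one]
  have hcoef1 : ηbar + 2 * k = (1 + k) ^ 2 := by nlinarith [hk2]
  have hcoef2 : (1 - z) / z = k := by
    rw [hz]
    field_simp
    ring
  rw [hcoef1, hcoef2]
  have key : v * qstar - c qstar ≤ k * ((1 + k) ^ 2 * A) := by
    have t2' : qv * (z * v) ≤ (k ^ 2 + 1) * A := by
      rw [show (k ^ 2 + 1 : ℝ) = ηbar by linarith]
      exact helastqv
    have hkey2 : 2 * m * ((z * v * (1 + k)) * qstar - c qstar)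
        ≤ 2 * m * (k * ((1 + k) ^ 2 * A)) := by
      nlinarith [mul_le_mul_of_nonneg_left htail (by positivity : (0:ℝ) ≤ 2 * m),
        mul_le_mul_of_nonneg_left t2' (by positivity : (0:ℝ) ≤ 2 * m * (1 + k)),
        mul_le_mul_of_nonneg_left hAlow (sq_nonneg k),
        sq_nonneg (m * (qstar - qv) - k * (z * v)), hmpos.le]
    rw [hveq] at hkey2
    exact le_of_mul_le_mul_left hkey2 (by positivity)
  rw [div_mul_eq_mul_div, div_le_iff₀ (by positivity : (0:ℝ) < (1 + k) ^ 2)]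
  calc (1:ℝ) * (v * qstar - c qstar) ≤ k * ((1 + k) ^ 2 * A) := by linarith [key]
    _ = k * A * (1 + k) ^ 2 := by ring
end

section
/- Let c : [0,∞) → ℝ be differentiable with c(0) = 0, c′(0) = 0, c′ nonnegative and convex. If c is twice differentiable at some q₀ > 0 with c′′(q₀) > 0, then c(q₀) ≥ c′(q₀)² / (2·c′′(q₀)). -/
open Real Set

/-- For a cost function `c` with `c 0 = 0`, derivative `cd` with `cd 0 = 0`,
`cd` nonnegative and convex on `[0, ∞)` (convex marginal cost), if `cd` has
derivative `d > 0` at some `q₀ > 0`, then `c q₀ ≥ (cd q₀)² / (2 * d)`. -/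
theorem stmt_9 (c cd : ℝ → ℝ)
    (hc0 : c 0 = 0)
    (hderiv : ∀ q ∈ Set.Ici (0 : ℝ), HasDerivAt c (cd q) q)
    (hcd0 : cd 0 = 0)
    (hcdnn : ∀ q ∈ Set.Ici (0 : ℝ), 0 ≤ cd q)
    (hconv : ConvexOn ℝ (Set.Ici 0) cd)
    (q₀ d : ℝ) (hq₀ : 0 < q₀)
    (hderiv2 : HasDerivAt cd d q₀) (hd : 0 < d) :
    cd q₀ ^ 2 / (2 * d) ≤ c q₀ := by
  set m := cd q₀ with hm
  -- tangent line bound: for y ∈ Ici 0, m + d * (y - q₀) ≤ cd y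
  have htan : ∀ y ∈ Set.Ici (0 : ℝ), m + d * (y - q₀) ≤ cd y := by
    intro y hy
    rcases lt_trichotomy y q₀ with h | h | h
    · have := hconv.slope_le_of_hasDerivAt hy (le_of_lt hq₀) h hderiv2
      rw [slope_def_field, div_le_iff₀ (by linarith)] at this
      nlinarith
    · simp [h, hm]
    · have := hconv.le_slope_of_hasDerivAt (le_of_lt hq₀) hy h hderiv2
      rw [slope_def_field, le_div_iff₀ (by linarith)] at this
      nlinarith
  have hmnn : 0 ≤ m := hcdnn q₀ (le_of_lt hq₀)
  have hmle : m ≤ d * q₀ := by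
    have := htan 0 Set.self_mem_Ici
    rw [hcd0] at this; nlinarith
  set a : ℝ := q₀ - m / d with ha
  have ha0 : 0 ≤ a := by
    rw [ha, sub_nonneg, div_le_iff₀ hd]; linarith
  have haq : a ≤ q₀ := by
    rw [ha]; have : 0 ≤ m / d := div_nonneg hmnn hd.le; linarith
  -- c is monotone on Ici 0
  have hcont : ContinuousOn c (Set.Ici 0) := fun x hx =>
    (hderiv x hx).continuousAt.continuousWithinAt
  have hmono : MonotoneOn c (Set.Ici 0) := by
    apply monotoneOn_of_deriv_nonneg (convex_Ici 0) hcont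
    · intro x hx
      rw [interior_Ici] at hx
      exact ((hderiv x (Set.mem_Ici.mpr (le_of_lt (Set.mem_Ioi.mp hx)))).differentiableAt).differentiableWithinAt
    · intro x hx
      rw [interior_Ici] at hx
      rw [(hderiv x (Set.mem_Ici.mpr (le_of_lt (Set.mem_Ioi.mp hx)))).deriv]
      exact hcdnn x (Set.mem_Ici.mpr (le_of_lt (Set.mem_Ioi.mp hx)))
  have hca : 0 ≤ c a := by
    have := hmono Set.self_mem_Ici ha0 ha0
    rwa [hc0] at this
  -- h q = c q - (m*(q-q₀) + d*(q-q₀)^2/2) is monotone on Ici 0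
  set g : ℝ → ℝ := fun q => c q - (m * (q - q₀) + d * (q - q₀) ^ 2 / 2) with hg
  have hgmono : MonotoneOn g (Set.Ici 0) := by
    have hgderiv : ∀ q ∈ Set.Ici (0:ℝ), HasDerivAt g (cd q - (m + d * (q - q₀))) q := by
      intro q hq
      have h1 : HasDerivAt (fun q => m * (q - q₀) + d * (q - q₀) ^ 2 / 2)
          (m + d * (q - q₀)) q := by
        have hid : HasDerivAt (fun q : ℝ => q - q₀) 1 q := by
          simpa using (hasDerivAt_id q).sub_const q₀
        have h2 : HasDerivAt (fun q : ℝ => m * (q - q₀)) m q := by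
          simpa using hid.const_mul m
        have h3 : HasDerivAt (fun q : ℝ => d * (q - q₀) ^ 2 / 2) (d * (q - q₀)) q := by
          have := ((hid.pow 2).const_mul d).div_const 2
          refine this.congr_deriv ?_
          ring
        exact h2.add h3
      exact (hderiv q hq).sub h1
    apply monotoneOn_of_deriv_nonneg (convex_Ici 0)
    · exact fun x hx => ((hgderiv x hx).continuousAt).continuousWithinAt
    · intro x hx
      rw [interior_Ici] at hx
      exact ((hgderiv x (Set.mem_Ici.mpr (le_of_lt (Set.mem_Ioi.mp hx)))).differentiableAt).differentiableWithinAt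
    · intro x hx
      rw [interior_Ici] at hx
      rw [(hgderiv x (Set.mem_Ici.mpr (le_of_lt (Set.mem_Ioi.mp hx)))).deriv]
      have := htan x (Set.mem_Ici.mpr (le_of_lt (Set.mem_Ioi.mp hx)))
      linarith
  have key := hgmono (ha0 : a ∈ Set.Ici 0) (le_of_lt hq₀ : q₀ ∈ Set.Ici 0) haq
  have haq₀ : a - q₀ = -(m / d) := by rw [ha]; ring
  rw [hg] at key
  simp only [haq₀] at key
  have hexp : m * -(m / d) + d * (-(m / d)) ^ 2 / 2 = -(m ^ 2 / (2 * d)) := by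
    field_simp; ring
  rw [hexp] at key
  simp only [sub_self, mul_zero, ne_eq, OfNat.ofNat_ne_zero, not_false_eq_true,
    zero_pow, zero_div, add_zero, sub_zero] at key
  linarith
end

section
/- Let c : [0,∞) → ℝ be differentiable with c′ convex, let 0 < q₀ ≤ q₁, suppose c is twice differentiable at q₀ with c′′(q₀) > 0, and set v = c′(q₁). Then ∫_{q₀}^{q₁} (v − c′(s)) ds ≤ (v − c′(q₀))² / (2·c′′(q₀)). -/
/-!
The tangent line of the convex marginal cost at `q₀` lies below it, so on `[q₀, q₁]` the
integrand `v - c' s` is dominated by the affine function `A - d (s - q₀)` with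
`A = v - c' q₀` and `d = c'' q₀`. Integrating gives `A t - d t² / 2` with `t = q₁ - q₀`,
and completing the square bounds this by `A² / (2 d)`.
-/

open Set

theorem ConvexOn.add_mul_sub_le_of_hasDerivAt {S : Set ℝ} {f : ℝ → ℝ} {x y f' : ℝ}
    (hf : ConvexOn ℝ S f) (hx : x ∈ S) (hy : y ∈ S) (hf' : HasDerivAt f f' x) :
    f x + f' * (y - x) ≤ f y := by
  rcases lt_trichotomy x y with hxy | rfl | hyx
  · have hslope := hf.le_slope_of_hasDerivAt hx hy hxy hf'
    rw [slope_def_field, le_div_iff₀ (sub_pos.mpr hxy)] at hslope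
    linarith
  · simp
  · have hslope := hf.slope_le_of_hasDerivAt hy hx hyx hf'
    rw [slope_def_field, div_le_iff₀ (sub_pos.mpr hyx)] at hslope
    linarith

theorem intervalIntegral.integral_sub_mul_sub_left (A d a b : ℝ) :
    ∫ s in a..b, (A - d * (s - a)) = A * (b - a) - d * (b - a) ^ 2 / 2 := by
  rw [intervalIntegral.integral_sub intervalIntegrable_const
      (Continuous.intervalIntegrable (by fun_prop) _ _),
    intervalIntegral.integral_const_mul, intervalIntegral.integral_comp_sub_right fun s => s,
    integral_id, intervalIntegral.integral_const, smul_eq_mul]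
  ring

theorem mul_sub_mul_sq_div_two_le {A t d : ℝ} (hd : 0 < d) :
    A * t - d * t ^ 2 / 2 ≤ A ^ 2 / (2 * d) := by
  rw [le_div_iff₀ (by positivity)]
  nlinarith [sq_nonneg (d * t - A)]

theorem stmt_10_general (cd : ℝ → ℝ)
    (hconv : ConvexOn ℝ (Set.Ici 0) cd)
    (q₀ q₁ d v : ℝ) (hq₀ : 0 < q₀) (hq₀₁ : q₀ ≤ q₁)
    (hderiv2 : HasDerivAt cd d q₀) (hd : 0 < d) :
    ∫ s in q₀..q₁, (v - cd s) ≤ (v - cd q₀) ^ 2 / (2 * d) := by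
  have hcont : ContinuousOn cd (Icc q₀ q₁) :=
    hconv.continuousOn_interior.mono fun s hs => by
      rw [interior_Ici]
      exact hq₀.trans_le hs.1
  calc ∫ s in q₀..q₁, (v - cd s)
      ≤ ∫ s in q₀..q₁, ((v - cd q₀) - d * (s - q₀)) := by
        refine intervalIntegral.integral_mono_on hq₀₁
          ((continuousOn_const.sub hcont).intervalIntegrable_of_Icc hq₀₁)
          (Continuous.intervalIntegrable (by fun_prop) _ _) fun s hs => ?_
        have htangent := hconv.add_mul_sub_le_of_hasDerivAt (mem_Ici.mpr hq₀.le)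
          (mem_Ici.mpr (hq₀.le.trans hs.1)) hderiv2
        linarith
    _ = (v - cd q₀) * (q₁ - q₀) - d * (q₁ - q₀) ^ 2 / 2 :=
        intervalIntegral.integral_sub_mul_sub_left _ _ _ _
    _ ≤ (v - cd q₀) ^ 2 / (2 * d) := mul_sub_mul_sq_div_two_le hd

/-- For a cost function `c` with convex marginal cost `cd = c'`, if `0 < q₀ ≤ q₁`,
`cd` has derivative `d > 0` at `q₀`, and `v = cd q₁`, then the efficiency loss from
stopping at `q₀` satisfies `∫_{q₀}^{q₁} (v - cd s) ds ≤ (v - cd q₀)² / (2 * d)`. -/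
theorem stmt_10 (c cd : ℝ → ℝ)
    (hderiv : ∀ q ∈ Set.Ici (0 : ℝ), HasDerivAt c (cd q) q)
    (hconv : ConvexOn ℝ (Set.Ici 0) cd)
    (q₀ q₁ d v : ℝ) (hq₀ : 0 < q₀) (hq₀₁ : q₀ ≤ q₁)
    (hderiv2 : HasDerivAt cd d q₀) (hd : 0 < d)
    (hv : v = cd q₁) :
    ∫ s in q₀..q₁, (v - cd s) ≤ (v - cd q₀) ^ 2 / (2 * d) :=
  stmt_10_general cd hconv q₀ q₁ d v hq₀ hq₀₁ hderiv2 hd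
end

section
/- Let η̄ < −1 be real and set p* = η̄/(η̄+1) (so p* > 1). Let D : (0,∞) → (0,∞) be differentiable with elasticity ε(p) = p·D′(p)/D(p) satisfying: ε is non-increasing on [1,∞) and ε(p) ∈ [η̄ − 1, η̄] for all p ≥ 1. Then ∫₁^∞ D(p) dp is finite and the uniform-price profit at price p* with unit cost 1 satisfies (p* − 1)·D(p*) ≥ (η̄/(η̄+1))^{η̄} · ∫₁^∞ D(p) dp. -/
open Real Set MeasureTheory

/-- Robust profit guarantee with non-constant demand elasticity.  Let `η̄ < -1`,
`p* = η̄/(η̄+1) > 1`, and let `D` be a positive differentiable demand function whose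
elasticity `ε p = p * D' p / D p` is non-increasing on `[1, ∞)` and lies in
`[η̄ - 1, η̄]` there.  Then the efficient surplus `∫₁^∞ D p dp` is finite and the
uniform-price profit at `p*` with unit cost `1` is at least
`(η̄/(η̄+1))^η̄ * ∫₁^∞ D p dp`. -/
theorem stmt_12 (ηbar : ℝ) (hηbar : ηbar < -1)
    (pstar : ℝ) (hp : pstar = ηbar / (ηbar + 1))
    (D D' : ℝ → ℝ)
    (hDpos : ∀ p : ℝ, 0 < p → 0 < D p)
    (hderiv : ∀ p : ℝ, 0 < p → HasDerivAt D (D' p) p)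
    (hanti : AntitoneOn (fun p => p * D' p / D p) (Set.Ici 1))
    (hbound : ∀ p : ℝ, 1 ≤ p → p * D' p / D p ∈ Set.Icc (ηbar - 1) ηbar) :
    IntegrableOn D (Set.Ioi 1) ∧
    (ηbar / (ηbar + 1)) ^ ηbar * ∫ p in Set.Ioi (1 : ℝ), D p
      ≤ (pstar - 1) * D pstar := by
  have ha : ηbar + 1 < 0 := by linarith
  have hp1 : (1 : ℝ) < pstar := by
    rw [hp, lt_div_iff_of_neg ha]; linarith
  have hps0 : (0 : ℝ) < pstar := by linarith
  set η : ℝ := pstar * D' pstar / D pstar with hηdef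
  have hηmem := hbound pstar hp1.le
  have hηub : η ≤ ηbar := hηmem.2
  have hηlb : ηbar - 1 ≤ η := hηmem.1
  have hηlt1 : η < -1 := lt_of_le_of_lt hηub hηbar
  have hη1 : η + 1 < 0 := by linarith
  -- the log-transformed function
  set g : ℝ → ℝ := fun p => Real.log (D p) - η * Real.log p with hgdef
  have hg : ∀ p : ℝ, 0 < p → HasDerivAt g (D' p / D p - η * p⁻¹) p := by
    intro p hp0
    exact ((hderiv p hp0).log (hDpos p hp0).ne').sub
      ((Real.hasDerivAt_log hp0.ne').const_mul η)
  -- derivative formula rewrite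
  have hderiv_eq : ∀ p : ℝ, 0 < p →
      D' p / D p - η * p⁻¹ = (p * D' p / D p - η) / p := by
    intro p hp0
    field_simp
  -- g p ≤ g pstar for all p ≥ 1
  have hgle : ∀ p : ℝ, 1 ≤ p → g p ≤ g pstar := by
    have hdiffOn : ∀ s : Set ℝ, s ⊆ Ioi (0 : ℝ) → DifferentiableOn ℝ g s := by
      intro s hs x hx
      exact ((hg x (hs hx)).differentiableAt).differentiableWithinAt
    have hcontOn : ∀ s : Set ℝ, s ⊆ Ioi (0 : ℝ) → ContinuousOn g s := by
      intro s hs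
      exact (hdiffOn s hs).continuousOn
    -- monotone on [1, pstar]
    have hmono : MonotoneOn g (Icc 1 pstar) := by
      apply monotoneOn_of_deriv_nonneg (convex_Icc 1 pstar)
      · exact hcontOn _ (fun x hx => lt_of_lt_of_le one_pos hx.1)
      · apply hdiffOn
        intro x hx
        rw [interior_Icc] at hx
        exact lt_trans one_pos hx.1
      · intro x hx
        rw [interior_Icc] at hx
        have hx0 : (0 : ℝ) < x := lt_trans one_pos hx.1
        rw [(hg x hx0).deriv, hderiv_eq x hx0]
        have hle : η ≤ x * D' x / D x := by
          have := hanti (mem_Ici.mpr hx.1.le) (mem_Ici.mpr hp1.le) hx.2.le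
          exact this
        exact div_nonneg (by linarith) hx0.le
    -- antitone on [pstar, ∞)
    have hantig : AntitoneOn g (Ici pstar) := by
      apply antitoneOn_of_deriv_nonpos (convex_Ici pstar)
      · exact hcontOn _ (fun x hx => lt_of_lt_of_le hps0 hx)
      · apply hdiffOn
        intro x hx
        rw [interior_Ici] at hx
        exact lt_trans hps0 hx
      · intro x hx
        rw [interior_Ici] at hx
        have hx0 : (0 : ℝ) < x := lt_trans hps0 hx
        rw [(hg x hx0).deriv, hderiv_eq x hx0]
        have hle : x * D' x / D x ≤ η := by
          have := hanti (mem_Ici.mpr hp1.le) (mem_Ici.mpr (le_trans hp1.le hx.le)) hx.le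
          exact this
        apply div_nonpos_of_nonpos_of_nonneg (by linarith) hx0.le
    intro p hp'
    rcases le_total p pstar with h | h
    · exact hmono (mem_Icc.mpr ⟨hp', h⟩) (mem_Icc.mpr ⟨hp1.le, le_refl _⟩) h
    · exact hantig (mem_Ici.mpr (le_refl _)) (mem_Ici.mpr h) h
  -- pointwise bound on D
  have hDle : ∀ p : ℝ, 1 ≤ p → D p ≤ D pstar * pstar ^ (-η) * p ^ η := by
    intro p hp'
    have hp0 : (0 : ℝ) < p := lt_of_lt_of_le one_pos hp'
    have hDp := hDpos p hp0
    have hDs := hDpos pstar hps0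
    have h := hgle p hp'
    simp only [hgdef] at h
    rw [← Real.log_le_log_iff hDp (by positivity),
      Real.log_mul (by positivity) (ne_of_gt (Real.rpow_pos_of_pos hp0 η)),
      Real.log_mul hDs.ne' (ne_of_gt (Real.rpow_pos_of_pos hps0 (-η))),
      Real.log_rpow hps0, Real.log_rpow hp0]
    linarith
  -- measurability
  have hmeas : AEStronglyMeasurable D (volume.restrict (Ioi 1)) := by
    have hcont : ContinuousOn D (Ioi (1 : ℝ)) := by
      intro x hx
      have hx0 : (0 : ℝ) < x := lt_trans one_pos (mem_Ioi.mp hx)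
      exact ((hderiv x hx0).continuousAt).continuousWithinAt
    exact hcont.aestronglyMeasurable measurableSet_Ioi
  -- integrability
  have hint_rpow : IntegrableOn (fun p : ℝ => D pstar * pstar ^ (-η) * p ^ η) (Ioi 1) :=
    (integrableOn_Ioi_rpow_of_lt hηlt1 one_pos).const_mul _
  have hD_int : IntegrableOn D (Ioi 1) := by
    apply Integrable.mono' hint_rpow hmeas
    filter_upwards [ae_restrict_mem measurableSet_Ioi] with p hp'
    have hp1' : (1 : ℝ) ≤ p := (mem_Ioi.mp hp').le
    rw [Real.norm_eq_abs, abs_of_pos (hDpos p (by linarith))]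
    exact hDle p hp1'
  refine ⟨hD_int, ?_⟩
  -- integral bound
  have hIle : (∫ p in Ioi (1 : ℝ), D p)
      ≤ D pstar * pstar ^ (-η) * (-1 / (η + 1)) := by
    have h1 : (∫ p in Ioi (1 : ℝ), D p)
        ≤ ∫ p in Ioi (1 : ℝ), D pstar * pstar ^ (-η) * p ^ η :=
      setIntegral_mono_on hD_int hint_rpow measurableSet_Ioi
        (fun p hp' => hDle p (mem_Ioi.mp hp').le)
    have h2 : (∫ p in Ioi (1 : ℝ), D pstar * pstar ^ (-η) * p ^ η)
        = D pstar * pstar ^ (-η) * (-1 / (η + 1)) := by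
      rw [MeasureTheory.integral_const_mul, integral_Ioi_rpow_of_lt hηlt1 one_pos,
        Real.one_rpow]
    linarith [h1, h2.le, h2.ge]
  -- final algebra
  have hDs := hDpos pstar hps0
  have hpsp : (0 : ℝ) < (ηbar / (ηbar + 1)) ^ ηbar := by
    rw [← hp]; exact Real.rpow_pos_of_pos hps0 ηbar
  have hne1 : ηbar + 1 ≠ 0 := ne_of_lt ha
  have hps1eq : pstar - 1 = -1 / (ηbar + 1) := by
    rw [hp, div_sub_one hne1]; ring_nf
  have hbern : pstar ^ (ηbar - η) ≤ 1 + (ηbar - η) * (pstar - 1) := by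
    have h := rpow_one_add_le_one_add_mul_self (s := pstar - 1)
      (by linarith) (p := ηbar - η) (by linarith) (by linarith)
    rw [show (1 : ℝ) + (pstar - 1) = pstar by ring] at h
    exact h
  -- key: pstar ^ (ηbar - η) * (-1/(η+1)) ≤ pstar - 1
  have hne2 : η + 1 ≠ 0 := ne_of_lt hη1
  have hkey : pstar ^ (ηbar - η) * (-1 / (η + 1)) ≤ pstar - 1 := by
    have hc : (0 : ℝ) < -1 / (η + 1) := by
      rw [div_pos_iff]; right; constructor <;> linarith
    have h1 : pstar ^ (ηbar - η) * (-1 / (η + 1))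
        ≤ (1 + (ηbar - η) * (pstar - 1)) * (-1 / (η + 1)) :=
      mul_le_mul_of_nonneg_right hbern hc.le
    have h2 : (1 + (ηbar - η) * (pstar - 1)) * (-1 / (η + 1)) = pstar - 1 := by
      rw [hps1eq]; field_simp; ring
    linarith
  have hsplit : (ηbar / (ηbar + 1)) ^ ηbar * pstar ^ (-η) = pstar ^ (ηbar - η) := by
    rw [← hp, ← Real.rpow_add hps0]
    ring_nf
  calc (ηbar / (ηbar + 1)) ^ ηbar * ∫ p in Set.Ioi (1 : ℝ), D p
      ≤ (ηbar / (ηbar + 1)) ^ ηbar * (D pstar * pstar ^ (-η) * (-1 / (η + 1))) :=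
        mul_le_mul_of_nonneg_left hIle hpsp.le
    _ = D pstar * (pstar ^ (ηbar - η) * (-1 / (η + 1))) := by
        rw [← hsplit]; ring
    _ ≤ D pstar * (pstar - 1) := mul_le_mul_of_nonneg_left hkey hDs.le
    _ = (pstar - 1) * D pstar := by ring
end

section
/- Let η̄ < −1 be real and set p* = η̄/(η̄+1). Then for every ε ∈ [η̄ − 1, η̄], one has −(ε + 1)·(p*)^ε ≥ −(η̄ + 1)·(p*)^{η̄}, with equality at both endpoints ε = η̄ and ε = η̄ − 1. -/
open Real Set

/-- Key one-variable inequality for the robust profit guarantee: for `η̄ < -1` and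
`p* = η̄/(η̄+1)`, the function `g ε = -(ε+1) * p* ^ ε` satisfies
`g ε ≥ g η̄` for all `ε ∈ [η̄ - 1, η̄]`, with equality at both endpoints. -/
theorem stmt_14 (ηbar : ℝ) (hηbar : ηbar < -1)
    (pstar : ℝ) (hp : pstar = ηbar / (ηbar + 1)) :
    (∀ ε ∈ Set.Icc (ηbar - 1) ηbar,
      -(ηbar + 1) * pstar ^ ηbar ≤ -(ε + 1) * pstar ^ ε) ∧
    -(ηbar + 1) * pstar ^ ηbar = -(ηbar + 1) * pstar ^ ηbar ∧
    -((ηbar - 1) + 1) * pstar ^ (ηbar - 1) = -(ηbar + 1) * pstar ^ ηbar := by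
  have ha : (0:ℝ) < -(ηbar + 1) := by linarith
  have hη1 : ηbar + 1 ≠ 0 := by linarith
  have hpgt : 1 < pstar := by
    rw [hp, lt_div_iff_of_neg (by linarith : ηbar + 1 < 0)]
    linarith
  have hppos : 0 < pstar := by linarith
  set a : ℝ := -(ηbar + 1) with ha_def
  have hpa : pstar - 1 = 1 / a := by
    rw [eq_div_iff ha.ne', hp, ha_def]
    field_simp
    ring
  refine ⟨?_, rfl, ?_⟩
  · intro ε hε
    obtain ⟨hε1, hε2⟩ := hε
    set s : ℝ := ηbar - ε with hs_def
    have hs0 : 0 ≤ s := by simp [hs_def]; linarith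
    have hs1 : s ≤ 1 := by simp [hs_def]; linarith
    -- Bernoulli: pstar ^ s ≤ 1 + s * (pstar - 1)
    have hB : pstar ^ s ≤ 1 + s * (pstar - 1) := by
      have := rpow_one_add_le_one_add_mul_self
        (s := pstar - 1) (by linarith) (p := s) hs0 hs1
      simpa using this
    have hkey : a * pstar ^ s ≤ a + s := by
      have h2 : a * pstar ^ s ≤ a * (1 + s * (1 / a)) := by
        apply mul_le_mul_of_nonneg_left _ ha.le
        rw [← hpa]; exact hB
      have h3 : a * (1 + s * (1 / a)) = a + s := by field_simp
      exact h2.trans h3.le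
    have hsplit : pstar ^ ηbar = pstar ^ ε * pstar ^ s := by
      rw [← Real.rpow_add hppos, hs_def]; ring_nf
    have hpe : 0 < pstar ^ ε := Real.rpow_pos_of_pos hppos ε
    have : a * (pstar ^ ε * pstar ^ s) ≤ (a + s) * pstar ^ ε := by
      calc a * (pstar ^ ε * pstar ^ s) = (a * pstar ^ s) * pstar ^ ε := by ring
        _ ≤ (a + s) * pstar ^ ε := mul_le_mul_of_nonneg_right hkey hpe.le
    rw [hsplit]
    calc a * (pstar ^ ε * pstar ^ s) ≤ (a + s) * pstar ^ ε := this
      _ = -(ε + 1) * pstar ^ ε := by rw [ha_def, hs_def]; ring_nf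
  · have : pstar ^ (ηbar - 1) = pstar ^ ηbar / pstar := by
      rw [Real.rpow_sub hppos, Real.rpow_one]
    rw [this, hp]
    have hηne : ηbar ≠ 0 := by linarith
    field_simp
    ring
end

section
/- Fix a real η > 1. For every θ > 0 and every p ∈ (0,1): (i) the function q ↦ p·q − θ·q^η/η on [0,∞) is uniquely maximized at q_p(θ) = (p/θ)^{1/(η−1)}; (ii) the buyer's surplus from the constant unit price p equals q_p(θ) − p·q_p(θ) = (1−p)·(p/θ)^{1/(η−1)} = r(p)·S(θ), where S(θ) = sup_{q ≥ 0}(q − θ·q^η/η) = ((η−1)/η)·θ^{−1/(η−1)} and r(p) = (η/(η−1))·(1−p)·p^{1/(η−1)}; and (iii) r(p) is uniquely maximized over p ∈ (0,1) at p = 1/η, with maximum value r(1/η) = η^{−1/(η−1)}. Hence the constant unit price p = 1/η guarantees the buyer the share η^{−1/(η−1)} of the efficient surplus for every cost type θ. -/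
open Real Set

/-- Strict tangent-line inequality for `x ↦ x ^ η`, `η > 1`. -/
lemma rpow_tangent_lt (η : ℝ) (hη : 1 < η) {x y : ℝ} (hx : 0 ≤ x) (hy : 0 < y)
    (hne : x ≠ y) : y ^ η + η * y ^ (η - 1) * (x - y) < x ^ η := by
  set z : ℝ := x / y - 1 with hz
  have hz1 : -1 ≤ z := by
    have : 0 ≤ x / y := div_nonneg hx hy.le
    simp [hz]; linarith
  have hz0 : z ≠ 0 := by
    simp only [hz, sub_ne_zero]
    intro h
    exact hne (by field_simp at h; linarith)
  have hstep : 1 + η * z < (1 + z) ^ η :=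
    one_add_mul_self_lt_rpow_one_add hz1 hz0 hη
  have h1z : 1 + z = x / y := by simp [hz]
  have hyη : (0 : ℝ) < y ^ η := Real.rpow_pos_of_pos hy η
  have hkey : y ^ η = y ^ (η - 1) * y := by
    rw [← Real.rpow_add_one hy.ne' (η - 1)]
    ring_nf
  have hxy : (1 + z) ^ η * y ^ η = x ^ η := by
    rw [h1z, Real.div_rpow hx hy.le]
    field_simp
  have hleft : y ^ η + η * y ^ (η - 1) * (x - y) = (1 + η * z) * y ^ η := by
    rw [hkey, hz]
    field_simp
  calc y ^ η + η * y ^ (η - 1) * (x - y) = (1 + η * z) * y ^ η := hleft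
    _ < (1 + z) ^ η * y ^ η := by exact (mul_lt_mul_iff_left₀ hyη).2 hstep
    _ = x ^ η := hxy

/-- The seller's problem `q ↦ a q - θ q^η/η` is uniquely maximized at `(a/θ)^(1/(η-1))`. -/
lemma seller_max (η : ℝ) (hη : 1 < η) {θ a : ℝ} (hθ : 0 < θ) (ha : 0 < a)
    {q : ℝ} (hq : 0 ≤ q) (hne : q ≠ (a / θ) ^ (1 / (η - 1))) :
    a * q - θ * q ^ η / η
      < a * (a / θ) ^ (1 / (η - 1)) - θ * ((a / θ) ^ (1 / (η - 1))) ^ η / η := by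
  have hηm : η - 1 ≠ 0 := by intro h; linarith [h]
  have hηpos : (0 : ℝ) < η := by linarith
  set y : ℝ := (a / θ) ^ (1 / (η - 1)) with hydef
  have hy : 0 < y := Real.rpow_pos_of_pos (div_pos ha hθ) _
  have hypow : y ^ (η - 1) = a / θ := by
    rw [hydef, ← Real.rpow_mul (div_pos ha hθ).le, one_div_mul_cancel hηm, Real.rpow_one]
  have hkey : θ * y ^ (η - 1) = a := by rw [hypow]; field_simp
  have ht := rpow_tangent_lt η hη hq hy hne
  have h3 : θ * (y ^ η + η * y ^ (η - 1) * (q - y)) < θ * q ^ η :=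
    (mul_lt_mul_iff_right₀ hθ).2 ht
  have hexp : θ * (y ^ η + η * y ^ (η - 1) * (q - y))
      = θ * y ^ η + η * a * q - η * a * y := by rw [← hkey]; ring
  have hgoal : η * (a * q - θ * q ^ η / η) < η * (a * y - θ * y ^ η / η) := by
    have e1 : η * (a * q - θ * q ^ η / η) = η * a * q - θ * q ^ η := by
      field_simp
    have e2 : η * (a * y - θ * y ^ η / η) = η * a * y - θ * y ^ η := by
      field_simp
    rw [e1, e2]
    linarith [h3, hexp.symm.le, hexp.le]
  exact lt_of_mul_lt_mul_left hgoal hηpos.le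

/-- `(1/t)^s = t^(-s)` for `t > 0`. -/
lemma one_div_rpow_eq (t : ℝ) (ht : 0 < t) (s : ℝ) :
    (1 / t) ^ s = t ^ (-s) := by
  rw [one_div, Real.inv_rpow ht.le, ← Real.rpow_neg ht.le]

/-- Procurement with quality differentiation: the seller's cost is `θ * q ^ η / η`
with `η > 1`, `θ > 0`.  Under a constant unit price `p ∈ (0,1)`:
(i) the seller's problem `q ↦ p * q - θ * q ^ η / η` on `[0,∞)` is uniquely
maximized at `q_p(θ) = (p/θ) ^ (1/(η-1))`;
(ii) the buyer's surplus `q_p(θ) - p * q_p(θ)` equals `(1-p) * (p/θ) ^ (1/(η-1))`,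
which equals `r(p) * S(θ)` where `S(θ) = sup_{q ≥ 0} (q - θ q^η/η)
= ((η-1)/η) * θ ^ (-1/(η-1))` and `r(p) = (η/(η-1)) * (1-p) * p ^ (1/(η-1))`;
(iii) `r` is uniquely maximized over `(0,1)` at `p = 1/η` with value
`η ^ (-1/(η-1))`. -/
theorem stmt_15 (η : ℝ) (hη : 1 < η) (θ : ℝ) (hθ : 0 < θ)
    (p : ℝ) (hp : p ∈ Set.Ioo (0 : ℝ) 1) :
    -- (i) unique maximizer of the seller's problem
    (∀ q : ℝ, 0 ≤ q → q ≠ (p / θ) ^ (1 / (η - 1)) →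
      p * q - θ * q ^ η / η
        < p * (p / θ) ^ (1 / (η - 1))
            - θ * ((p / θ) ^ (1 / (η - 1))) ^ η / η) ∧
    -- the efficient surplus S(θ) is the (attained) supremum of q - θ q^η/η over q ≥ 0
    IsGreatest ((fun q : ℝ => q - θ * q ^ η / η) '' Set.Ici 0)
      ((η - 1) / η * θ ^ (-(1 / (η - 1)))) ∧
    -- (ii) the buyer's surplus from the constant unit price p
    ((p / θ) ^ (1 / (η - 1)) - p * (p / θ) ^ (1 / (η - 1))
        = (1 - p) * (p / θ) ^ (1 / (η - 1))) ∧
    ((1 - p) * (p / θ) ^ (1 / (η - 1))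
        = (η / (η - 1) * (1 - p) * p ^ (1 / (η - 1)))
            * ((η - 1) / η * θ ^ (-(1 / (η - 1))))) ∧
    -- (iii) r is uniquely maximized at p = 1/η
    (∀ p' ∈ Set.Ioo (0 : ℝ) 1, p' ≠ 1 / η →
      η / (η - 1) * (1 - p') * p' ^ (1 / (η - 1))
        < η / (η - 1) * (1 - 1 / η) * (1 / η) ^ (1 / (η - 1))) ∧
    η / (η - 1) * (1 - 1 / η) * (1 / η) ^ (1 / (η - 1))
      = η ^ (-(1 / (η - 1))) := by
  have hηm : η - 1 ≠ 0 := by intro h; linarith [h]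
  have hηm' : (0:ℝ) < η - 1 := by linarith
  have hηpos : (0 : ℝ) < η := by linarith
  have hη0 : η ≠ 0 := hηpos.ne'
  obtain ⟨hp0, hp1⟩ := hp
  set β : ℝ := 1 / (η - 1) with hβ
  have hβpos : 0 < β := by positivity
  have cancel : ∀ x : ℝ, 0 ≤ x → (x ^ β) ^ (η - 1) = x := by
    intro x hx
    rw [← Real.rpow_mul hx, hβ, one_div_mul_cancel hηm, Real.rpow_one]
  have hβη : β * η = 1 + β := by
    rw [hβ]
    field_simp
    ring
  -- value of the seller's problem at the maximizer, for a = 1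
  have value : ∀ t : ℝ, 0 < t →
      (1 / t) ^ β - t * ((1 / t) ^ β) ^ η / η = (η - 1) / η * t ^ (-β) := by
    intro t ht
    have hq₁ : 0 < (1 / t) ^ β := Real.rpow_pos_of_pos (by positivity) _
    have hpow : ((1 / t) ^ β) ^ η = (1 / t) ^ β * (1 / t) := by
      have : ((1 / t) ^ β) ^ η = (1 / t) ^ (β * η) := by
        rw [← Real.rpow_mul (by positivity : (0:ℝ) ≤ 1 / t)]
      rw [this, hβη, Real.rpow_add (by positivity : (0:ℝ) < 1 / t), Real.rpow_one]
      ring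
    rw [hpow, ← one_div_rpow_eq t ht]
    field_simp
  -- general reformulation of (1-x) x^β as the seller objective at θ = η, a = 1
  have reform : ∀ x : ℝ, 0 ≤ x →
      (1 - x) * x ^ β = x ^ β - η * (x ^ β) ^ η / η := by
    intro x hx
    have hpow : (x ^ β) ^ η = x * x ^ β := by
      rcases eq_or_lt_of_le hx with h | h
      · rw [← h]
        rw [Real.zero_rpow hβpos.ne', Real.zero_rpow hηpos.ne']
        ring
      · have : (x ^ β) ^ η = x ^ (β * η) := (Real.rpow_mul hx β η).symm
        rw [this, hβη, Real.rpow_add h, Real.rpow_one]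
    rw [hpow]
    field_simp
  refine ⟨?_, ?_, ?_, ?_, ?_, ?_⟩
  · -- (i)
    intro q hq hne
    exact seller_max η hη hθ hp0 hq hne
  · -- IsGreatest
    constructor
    · refine ⟨(1 / θ) ^ β, mem_Ici.2 (Real.rpow_pos_of_pos (by positivity) _).le, ?_⟩
      exact value θ hθ
    · rintro v ⟨q, hq, rfl⟩
      simp only [mem_Ici] at hq
      rw [← value θ hθ]
      have h1θ : (1 : ℝ) / θ = 1 / θ := rfl
      rcases eq_or_ne q ((1 / θ) ^ β) with h | h
      · rw [h]
      · have := seller_max η hη hθ one_pos hq (by simpa [hβ] using h)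
        simp only [one_mul] at this
        exact this.le
  · -- (ii) first equality
    ring
  · -- (ii) second equality
    have hsplit : (p / θ) ^ β = p ^ β * θ ^ (-β) := by
      rw [div_eq_mul_inv, Real.mul_rpow hp0.le (by positivity),
        Real.inv_rpow hθ.le, ← Real.rpow_neg hθ.le]
    rw [hsplit]
    field_simp
  · -- (iii) strict maximization of r at 1/η
    intro p' hp' hne
    obtain ⟨hp'0, hp'1⟩ := hp'
    have h1η : (0:ℝ) < 1 / η := by positivity
    have hC : (0:ℝ) < η / (η - 1) := by positivity
    have hq'ne : p' ^ β ≠ (1 / η) ^ β := by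
      intro h
      apply hne
      have h2 : (p' ^ β) ^ (η - 1) = ((1 / η) ^ β) ^ (η - 1) := by rw [h]
      rw [cancel p' hp'0.le, cancel (1 / η) h1η.le] at h2
      exact h2
    have key := seller_max η hη (θ := η) (a := 1) hηpos one_pos
      (Real.rpow_nonneg hp'0.le β) (by simpa [hβ] using hq'ne)
    simp only [one_mul] at key
    have e1 := reform p' hp'0.le
    have e2 := reform (1 / η) h1η.le
    have key' : (1 - p') * p' ^ β < (1 - 1 / η) * (1 / η) ^ β := by
      rw [e1, e2]
      simpa [hβ] using key
    calc η / (η - 1) * (1 - p') * p' ^ β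
        = η / (η - 1) * ((1 - p') * p' ^ β) := by ring
      _ < η / (η - 1) * ((1 - 1 / η) * (1 / η) ^ β) := (mul_lt_mul_iff_right₀ hC).2 key'
      _ = η / (η - 1) * (1 - 1 / η) * (1 / η) ^ β := by ring
  · -- value of r at 1/η
    rw [one_div_rpow_eq η hηpos]
    have h1 : η / (η - 1) * (1 - 1 / η) = 1 := by field_simp
    rw [h1, one_mul]
end

section
/- Fix a real η < −1. For every θ > 0 and every z ∈ (0,1): (i) the function q ↦ ∫₀^q z·s^{1/η} ds − θ·q on (0,∞) is uniquely maximized at q_z(θ) = (θ/z)^η; (ii) the buyer's surplus equals u(q_z(θ)) − ∫₀^{q_z(θ)} z·s^{1/η} ds = (1−z)·(η/(η+1))·(θ/z)^{η+1} = ρ(z)·S(θ), where S(θ) = sup_{q ≥ 0}(u(q) − θ·q) = −θ^{η+1}/(η+1) and ρ(z) = −η·(1−z)·z^{−η−1}; and (iii) ρ(z) is uniquely maximized over z ∈ (0,1) at z = (η+1)/η, with maximum value ρ((η+1)/η) = (η/(η+1))^{η+1}. Hence the constant-markup price schedule p(q) = ((η+1)/η)·q^{1/η} guarantees the buyer the share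 (η/(η+1))^{η+1} of the efficient surplus for every cost type θ. -/
open Real Set

lemma bern {w y : ℝ} (hw0 : 0 < w) (hw1 : w < 1) (hy : 0 ≤ y) (hne : y ≠ 1) :
    y ^ w < 1 + w * (y - 1) := by
  have h := rpow_one_add_lt_one_add_mul_self (s := y - 1) (by linarith) (by
    intro h; apply hne; linarith) hw0 hw1
  simpa using h

lemma key {α A B Q : ℝ} (hα0 : 0 < α) (hα1 : α < 1) (hA : 0 < A) (hQ : 0 < Q)
    (hst : A * α * Q ^ α = B * Q) {q : ℝ} (hq : 0 ≤ q) (hne : q ≠ Q) :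
    A * q ^ α - B * q < A * Q ^ α - B * Q := by
  have hdiv : q / Q ≠ 1 := by
    intro h; apply hne; field_simp at h; linarith
  have hb := bern hα0 hα1 (div_nonneg hq hQ.le) hdiv
  have hsplit : q ^ α = (q / Q) ^ α * Q ^ α := by
    rw [Real.div_rpow hq hQ.le]; field_simp
  have hQα : 0 < Q ^ α := Real.rpow_pos_of_pos hQ _
  have h2 : A * q ^ α < A * Q ^ α + A * α * Q ^ α * (q / Q - 1) := by
    rw [hsplit]
    have := mul_lt_mul_of_pos_left hb (mul_pos hA hQα)
    nlinarith [this]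
  rw [hst] at h2
  have : B * Q * (q / Q - 1) = B * q - B * Q := by field_simp
  linarith [h2, this.le, this.ge]


/-- Procurement with quantity differentiation: the buyer has utility
`u q = (η/(η+1)) * q ^ ((η+1)/η)` with `η < -1`, the seller has private constant
marginal cost `θ > 0`.  Under the constant-markup price schedule `p q = z * q ^ (1/η)`
with `z ∈ (0,1)`:
(i) the seller's problem `q ↦ ∫₀^q z * s^(1/η) ds - θ * q` on `(0,∞)` is uniquely
maximized at `q_z(θ) = (θ/z) ^ η`;
(ii) the buyer's surplus `u (q_z θ) - ∫₀^{q_z θ} z * s^(1/η) ds` equals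
`(1-z) * (η/(η+1)) * (θ/z) ^ (η+1) = ρ(z) * S(θ)`, where
`S(θ) = sup_{q ≥ 0} (u q - θ q) = -θ^(η+1)/(η+1)` and `ρ(z) = -η (1-z) z^(-η-1)`;
(iii) `ρ` is uniquely maximized over `(0,1)` at `z = (η+1)/η` with value
`(η/(η+1))^(η+1)`. -/
theorem stmt_16 (η : ℝ) (hη : η < -1) (θ : ℝ) (hθ : 0 < θ)
    (z : ℝ) (hz : z ∈ Set.Ioo (0 : ℝ) 1) :
    -- (i) unique maximizer of the seller's problem on (0,∞)
    (∀ q : ℝ, 0 < q → q ≠ (θ / z) ^ η →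
      (∫ s in (0 : ℝ)..q, z * s ^ (1 / η)) - θ * q
        < (∫ s in (0 : ℝ)..(θ / z) ^ η, z * s ^ (1 / η)) - θ * (θ / z) ^ η) ∧
    -- the efficient surplus S(θ) is the (attained) supremum of u q - θ q over q ≥ 0
    IsGreatest
      ((fun q : ℝ => η / (η + 1) * q ^ ((η + 1) / η) - θ * q) '' Set.Ici 0)
      (-θ ^ (η + 1) / (η + 1)) ∧
    -- (ii) the buyer's surplus under the constant-markup schedule
    (η / (η + 1) * ((θ / z) ^ η) ^ ((η + 1) / η)
        - (∫ s in (0 : ℝ)..(θ / z) ^ η, z * s ^ (1 / η))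
      = (1 - z) * (η / (η + 1)) * (θ / z) ^ (η + 1)) ∧
    ((1 - z) * (η / (η + 1)) * (θ / z) ^ (η + 1)
      = (-η * (1 - z) * z ^ (-η - 1)) * (-θ ^ (η + 1) / (η + 1))) ∧
    -- (iii) ρ is uniquely maximized at z = (η+1)/η
    (∀ z' ∈ Set.Ioo (0 : ℝ) 1, z' ≠ (η + 1) / η →
      -η * (1 - z') * z' ^ (-η - 1)
        < -η * (1 - (η + 1) / η) * ((η + 1) / η) ^ (-η - 1)) ∧
    -η * (1 - (η + 1) / η) * ((η + 1) / η) ^ (-η - 1)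
      = (η / (η + 1)) ^ (η + 1) := by
  obtain ⟨hz0, hz1⟩ := hz
  have hη0 : η < 0 := by linarith
  have hη1 : η + 1 < 0 := by linarith
  have hηne : η ≠ 0 := hη0.ne
  have hη1ne : η + 1 ≠ 0 := hη1.ne
  have hα0 : 0 < (η + 1) / η := div_pos_of_neg_of_neg hη1 hη0
  have hα1 : (η + 1) / η < 1 := by
    rw [div_lt_one_of_neg hη0]; linarith
  have hratio : 0 < η / (η + 1) := div_pos_of_neg_of_neg hη0 hη1
  have hθz : 0 < θ / z := div_pos hθ hz0
  set Q : ℝ := (θ / z) ^ η with hQdef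
  have hQ : 0 < Q := Real.rpow_pos_of_pos hθz _
  -- integral computation
  have hint : ∀ q : ℝ, 0 ≤ q →
      (∫ s in (0 : ℝ)..q, z * s ^ (1 / η)) = z * (η / (η + 1)) * q ^ ((η + 1) / η) := by
    intro q hq
    have hr : (-1 : ℝ) < 1 / η := by
      rw [lt_div_iff_of_neg hη0]; linarith
    rw [intervalIntegral.integral_const_mul, integral_rpow (Or.inl hr)]
    have h0 : (0 : ℝ) ^ (1 / η + 1) = 0 := Real.zero_rpow (by
      intro h; rw [div_add' _ _ _ hηne] at h
      have := div_eq_zero_iff.mp h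
      rcases this with h' | h' <;> [linarith; exact hηne h'])
    have hexp : 1 / η + 1 = (η + 1) / η := by field_simp; ring
    rw [h0, hexp]
    rw [div_eq_mul_inv, ← mul_assoc]
    have : ((η + 1) / η)⁻¹ = η / (η + 1) := by rw [inv_div]
    rw [sub_zero, this]
    ring
  -- key exponent identities
  have hQα : Q ^ ((η + 1) / η) = (θ / z) ^ (η + 1) := by
    rw [hQdef, ← Real.rpow_mul hθz.le]
    congr 1; field_simp
  have hQst : z * (η / (η + 1)) * ((η + 1) / η) * Q ^ ((η + 1) / η) = θ * Q := by
    rw [hQα, show η + 1 = η + (1:ℝ) from rfl, Real.rpow_add hθz, Real.rpow_one, hQdef]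
    field_simp
  have hAz : 0 < z * (η / (η + 1)) := mul_pos hz0 hratio
  refine ⟨?_, ?_, ?_, ?_, ?_, ?_⟩
  · -- (i)
    intro q hq hne
    rw [hint q hq.le, hint Q hQ.le]
    exact key hα0 hα1 hAz hQ hQst hq.le hne
  · -- IsGreatest
    have hT : 0 < θ ^ η := Real.rpow_pos_of_pos hθ _
    have hTα : (θ ^ η) ^ ((η + 1) / η) = θ ^ (η + 1) := by
      rw [← Real.rpow_mul hθ.le]
      congr 1; field_simp
    have hTst : η / (η + 1) * ((η + 1) / η) * (θ ^ η) ^ ((η + 1) / η) = θ * θ ^ η := by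
      rw [hTα, show η + 1 = η + (1:ℝ) from rfl, Real.rpow_add hθ, Real.rpow_one]
      field_simp
    have hval : η / (η + 1) * (θ ^ η) ^ ((η + 1) / η) - θ * θ ^ η
        = -θ ^ (η + 1) / (η + 1) := by
      rw [hTα, show η + 1 = η + (1:ℝ) from rfl, Real.rpow_add hθ, Real.rpow_one]
      field_simp
      ring
    constructor
    · exact ⟨θ ^ η, hT.le, hval⟩
    · rintro x ⟨q, hq, rfl⟩
      simp only [mem_Ici] at hq
      rcases eq_or_ne q (θ ^ η) with rfl | hne
      · exact hval.le
      · have := key hα0 hα1 hratio hT hTst hq hne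
        rw [hval] at this
        exact this.le
  · -- (ii) first equation
    rw [hint Q hQ.le, hQα]
    ring
  · -- (ii) second equation
    have hdr : (θ / z) ^ (η + 1) = θ ^ (η + 1) / z ^ (η + 1) :=
      Real.div_rpow hθ.le hz0.le _
    have hzn : z ^ (-η - 1) = (z ^ (η + 1))⁻¹ := by
      rw [show -η - 1 = -(η + 1) by ring, Real.rpow_neg hz0.le]
    have hzp : (0:ℝ) < z ^ (η + 1) := Real.rpow_pos_of_pos hz0 _
    rw [hdr, hzn]
    field_simp
  · -- (iii) strict max
    intro z' hz' hne'
    have hz'0 : 0 < z' := hz'.1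
    have hβ : (0:ℝ) < -η - 1 + 1 := by linarith
    have hexp2 : ∀ x : ℝ, 0 < x → (x ^ (-η - 1 + 1)) ^ ((η + 1) / η) = x ^ (-η - 1) := by
      intro x hx
      rw [← Real.rpow_mul hx.le]
      congr 1; field_simp; ring
    have hQ' : 0 < ((η + 1) / η) ^ (-η - 1 + 1) := Real.rpow_pos_of_pos hα0 _
    have hq' : (0:ℝ) ≤ z' ^ (-η - 1 + 1) := (Real.rpow_pos_of_pos hz'0 _).le
    have hst3 : 1 * ((η + 1) / η) * (((η + 1) / η) ^ (-η - 1 + 1)) ^ ((η + 1) / η)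
        = 1 * ((η + 1) / η) ^ (-η - 1 + 1) := by
      rw [hexp2 _ hα0, one_mul, one_mul,
        Real.rpow_add hα0, Real.rpow_one]
      ring
    have hqne : z' ^ (-η - 1 + 1) ≠ ((η + 1) / η) ^ (-η - 1 + 1) := by
      rcases hne'.lt_or_gt with h | h
      · exact ne_of_lt (Real.rpow_lt_rpow hz'0.le h hβ)
      · exact (ne_of_lt (Real.rpow_lt_rpow hα0.le h hβ)).symm
    have hk := key hα0 hα1 one_pos hQ' hst3 hq' hqne
    rw [hexp2 _ hα0, hexp2 _ hz'0] at hk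
    have e1 : z' ^ (-η - 1 + 1) = z' ^ (-η - 1) * z' := by
      rw [Real.rpow_add hz'0, Real.rpow_one]
    have e2 : ((η + 1) / η) ^ (-η - 1 + 1) = ((η + 1) / η) ^ (-η - 1) * ((η + 1) / η) := by
      rw [Real.rpow_add hα0, Real.rpow_one]
    rw [e1, e2] at hk
    have hηpos : (0:ℝ) < -η := by linarith
    nlinarith [hk, hηpos]
  · -- value of ρ at the maximizer
    have h1 : -η * (1 - (η + 1) / η) = 1 := by field_simp; ring
    rw [h1, one_mul]
    have hx : (0:ℝ) < η / (η + 1) := hratio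
    rw [show (η + 1) / η = (η / (η + 1))⁻¹ by rw [inv_div],
      Real.inv_rpow hx.le, show -η - 1 = -(η + 1) by ring,
      Real.rpow_neg hx.le, inv_inv]
end
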